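/- arXiv:1209.4174 — 8 statements merged into one kernel-verified Lean document; each statement's English description precedes it below -/
import Mathlib

section
/- If f, g : ℝⁿ → ℂ both belong to the space 𝒪_C of very slowly increasing functions, then their pointwise product f·g also belongs to 𝒪_C. More precisely, if k₁, k₂ ∈ ℕ are such that for every order j the functions x ↦ (1+‖x‖²)^{-k₁}·iteratedFDeriv ℝ j f x and x ↦ (1+‖x‖²)^{-k₂}·iteratedFDeriv ℝ j g x tend to 0 at infinity, then for k = k₁ + k₂ and every order j, the function x ↦ (1+‖x‖²)^{-k}·iteratedFDeriv ℝ j (f·g) x tends to 0 at infinity. In particular (𝒪_C, ·) is a multiplication algebra. -/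
open Filter

/-- If `f, g : ℝⁿ → ℂ` belong to the space `𝒪_C` of very slowly increasing functions,
witnessed by `k₁` and `k₂` respectively, then the pointwise product `f·g` belongs to `𝒪_C`
with witness `k = k₁ + k₂`. In particular `(𝒪_C, ·)` is a multiplication algebra. -/
theorem product_of_very_slowly_increasing (n : ℕ) (f g : EuclideanSpace ℝ (Fin n) → ℂ)
    (hf : ContDiff ℝ (⊤ : ℕ∞) f) (hg : ContDiff ℝ (⊤ : ℕ∞) g) (k₁ k₂ : ℕ)
    (hfk : ∀ j : ℕ, Tendsto
      (fun x : EuclideanSpace ℝ (Fin n) => ((1 + ‖x‖ ^ 2) ^ k₁)⁻¹ * ‖iteratedFDeriv ℝ j f x‖)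
      (cocompact (EuclideanSpace ℝ (Fin n))) (nhds 0))
    (hgk : ∀ j : ℕ, Tendsto
      (fun x : EuclideanSpace ℝ (Fin n) => ((1 + ‖x‖ ^ 2) ^ k₂)⁻¹ * ‖iteratedFDeriv ℝ j g x‖)
      (cocompact (EuclideanSpace ℝ (Fin n))) (nhds 0)) :
    ∀ j : ℕ, Tendsto
      (fun x : EuclideanSpace ℝ (Fin n) =>
        ((1 + ‖x‖ ^ 2) ^ (k₁ + k₂))⁻¹ * ‖iteratedFDeriv ℝ j (fun y => f y * g y) x‖)
      (cocompact (EuclideanSpace ℝ (Fin n))) (nhds 0) := by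
  intro j
  have hw : ∀ x : EuclideanSpace ℝ (Fin n), (0:ℝ) < 1 + ‖x‖ ^ 2 := fun x => by positivity
  have hbound : ∀ x : EuclideanSpace ℝ (Fin n),
      ((1 + ‖x‖ ^ 2) ^ (k₁ + k₂))⁻¹ * ‖iteratedFDeriv ℝ j (fun y => f y * g y) x‖ ≤
      ∑ i ∈ Finset.range (j + 1), (j.choose i : ℝ) *
        (((1 + ‖x‖ ^ 2) ^ k₁)⁻¹ * ‖iteratedFDeriv ℝ i f x‖) *
        (((1 + ‖x‖ ^ 2) ^ k₂)⁻¹ * ‖iteratedFDeriv ℝ (j - i) g x‖) := by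
    intro x
    have hle := norm_iteratedFDeriv_mul_le (𝕜 := ℝ) (n := j) hf hg x (by exact_mod_cast le_top)
    calc ((1 + ‖x‖ ^ 2) ^ (k₁ + k₂))⁻¹ * ‖iteratedFDeriv ℝ j (fun y => f y * g y) x‖
        ≤ ((1 + ‖x‖ ^ 2) ^ (k₁ + k₂))⁻¹ *
          ∑ i ∈ Finset.range (j + 1), (j.choose i : ℝ) *
            ‖iteratedFDeriv ℝ i f x‖ * ‖iteratedFDeriv ℝ (j - i) g x‖ := by
          apply mul_le_mul_of_nonneg_left hle
          positivity
      _ = _ := by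
          rw [Finset.mul_sum]
          refine Finset.sum_congr rfl fun i _ => ?_
          rw [pow_add, mul_inv]
          ring
  refine squeeze_zero (fun x => by positivity) hbound ?_
  have : Tendsto (fun x : EuclideanSpace ℝ (Fin n) =>
      ∑ i ∈ Finset.range (j + 1), (j.choose i : ℝ) *
        (((1 + ‖x‖ ^ 2) ^ k₁)⁻¹ * ‖iteratedFDeriv ℝ i f x‖) *
        (((1 + ‖x‖ ^ 2) ^ k₂)⁻¹ * ‖iteratedFDeriv ℝ (j - i) g x‖))
      (cocompact (EuclideanSpace ℝ (Fin n)))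
      (nhds (∑ i ∈ Finset.range (j + 1), (0:ℝ))) := by
    apply tendsto_finset_sum
    intro i _
    have h1 := hfk i
    have h2 := hgk (j - i)
    have := ((h1.const_mul ((j.choose i : ℝ))).mul h2)
    simpa using this
  simpa using this
end

section
/- For n ≥ 1, the function f : ℝⁿ → ℂ given by f(x) = exp(i‖x‖²) is smooth and belongs to 𝒪_M but does not belong to 𝒪_C: for every order j there exists k ∈ ℕ such that x ↦ (1+‖x‖²)^{-k}·iteratedFDeriv ℝ j f x tends to 0 at infinity, but there is no single k ∈ ℕ such that this holds for every order j simultaneously. -/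
open Filter Polynomial

/-- The pair of real polynomials (a_j, b_j) such that the j-th derivative of
exp(i t²) is (a_j(t) + i b_j(t)) exp(i t²). -/
noncomputable def expISqPoly : ℕ → Polynomial ℝ × Polynomial ℝ
  | 0 => (1, 0)
  | (j+1) =>
    ((expISqPoly j).1.derivative - Polynomial.C 2 * Polynomial.X * (expISqPoly j).2,
     (expISqPoly j).2.derivative + Polynomial.C 2 * Polynomial.X * (expISqPoly j).1)

lemma expISqPoly_iteratedDeriv (j : ℕ) (t : ℝ) :
    iteratedDeriv j (fun s : ℝ => Complex.exp (Complex.I * (s:ℂ)^2)) t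
      = ((((expISqPoly j).1.eval t : ℝ) : ℂ) + (((expISqPoly j).2.eval t : ℝ) : ℂ) * Complex.I)
        * Complex.exp (Complex.I * (t:ℂ)^2) := by
  induction j generalizing t with
  | zero => simp [expISqPoly]
  | succ j ih =>
    rw [iteratedDeriv_succ]
    have hcong : deriv (iteratedDeriv j (fun s : ℝ => Complex.exp (Complex.I * (s:ℂ)^2))) t
        = deriv (fun s : ℝ =>
            ((((expISqPoly j).1.eval s : ℝ) : ℂ) + (((expISqPoly j).2.eval s : ℝ) : ℂ) * Complex.I)
            * Complex.exp (Complex.I * (s:ℂ)^2)) t := by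
      apply congrFun (congrArg deriv (funext fun s => ih s))
    rw [hcong]
    set a := (expISqPoly j).1
    set b := (expISqPoly j).2
    have hu : HasDerivAt (fun s : ℝ =>
        (((a.eval s : ℝ)) : ℂ) + (((b.eval s : ℝ)) : ℂ) * Complex.I)
        (((a.derivative.eval t : ℝ) : ℂ) + ((b.derivative.eval t : ℝ) : ℂ) * Complex.I) t :=
      ((a.hasDerivAt t).ofReal_comp).add (((b.hasDerivAt t).ofReal_comp).mul_const Complex.I)
    have hw : HasDerivAt (fun s : ℝ => Complex.I * (s:ℂ)^2) (Complex.I * (2*t)) t := by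
      have h1 : HasDerivAt (fun s : ℝ => ((s^2 : ℝ) : ℂ)) ((2*t : ℝ) : ℂ) t := by
        have := (hasDerivAt_pow 2 t).ofReal_comp
        simpa using this
      have h2 : (fun s : ℝ => Complex.I * (s:ℂ)^2) = fun s : ℝ => Complex.I * ((s^2 : ℝ) : ℂ) := by
        funext s; push_cast; ring
      rw [h2]
      simpa using h1.const_mul Complex.I
    have hv : HasDerivAt (fun s : ℝ => Complex.exp (Complex.I * (s:ℂ)^2))
        (Complex.exp (Complex.I * (t:ℂ)^2) * (Complex.I * (2*t))) t := hw.cexp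
    have := (hu.mul hv).deriv
    rw [show deriv (fun s : ℝ => ((((a.eval s : ℝ)) : ℂ) + (((b.eval s : ℝ)) : ℂ) * Complex.I)
        * Complex.exp (Complex.I * (s:ℂ)^2)) t = _ from this]
    show _ = ((((a.derivative - Polynomial.C 2 * Polynomial.X * b).eval t : ℝ) : ℂ)
        + (((b.derivative + Polynomial.C 2 * Polynomial.X * a).eval t : ℝ) : ℂ) * Complex.I)
        * Complex.exp (Complex.I * (t:ℂ)^2)
    simp only [Polynomial.eval_sub, Polynomial.eval_add, Polynomial.eval_mul, Polynomial.eval_C,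
      Polynomial.eval_X]
    push_cast
    ring_nf
    simp only [Complex.I_sq]
    ring

lemma expISqPoly_spec (j : ℕ) :
    (expISqPoly j).1.degree ≤ (j : WithBot ℕ) ∧ (expISqPoly j).2.degree ≤ (j : WithBot ℕ) ∧
    (Even j → (expISqPoly j).1.coeff j = (-4 : ℝ)^(j/2)) ∧
    (Odd j → (expISqPoly j).2.coeff j = 2 * (-4 : ℝ)^(j/2)) := by
  induction j with
  | zero =>
    refine ⟨?_, ?_, ?_, ?_⟩
    · simpa [expISqPoly] using Polynomial.degree_one_le
    · simp [expISqPoly]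
    · intro _; simp [expISqPoly]
    · intro h; exact absurd h (by simp)
  | succ j ih =>
    obtain ⟨hA, hB, hCE, hCO⟩ := ih
    set a := (expISqPoly j).1
    set b := (expISqPoly j).2
    have hXb : (Polynomial.C (2:ℝ) * Polynomial.X * b).degree ≤ ((j+1 : ℕ) : WithBot ℕ) := by
      calc (Polynomial.C (2:ℝ) * Polynomial.X * b).degree
          ≤ (Polynomial.C (2:ℝ) * Polynomial.X).degree + b.degree := Polynomial.degree_mul_le _ _
        _ ≤ 1 + (j : WithBot ℕ) := by
            refine add_le_add ?_ hB
            simpa using Polynomial.degree_C_mul_le (2:ℝ) Polynomial.X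
        _ = ((j+1 : ℕ) : WithBot ℕ) := by
            push_cast; rw [add_comm]
    have hXa : (Polynomial.C (2:ℝ) * Polynomial.X * a).degree ≤ ((j+1 : ℕ) : WithBot ℕ) := by
      calc (Polynomial.C (2:ℝ) * Polynomial.X * a).degree
          ≤ (Polynomial.C (2:ℝ) * Polynomial.X).degree + a.degree := Polynomial.degree_mul_le _ _
        _ ≤ 1 + (j : WithBot ℕ) := by
            refine add_le_add ?_ hA
            simpa using Polynomial.degree_C_mul_le (2:ℝ) Polynomial.X
        _ = ((j+1 : ℕ) : WithBot ℕ) := by push_cast; rw [add_comm]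
    have hj1 : (j : WithBot ℕ) < ((j+1 : ℕ) : WithBot ℕ) := by
      exact_mod_cast Nat.lt_succ_self j
    have hda : a.derivative.degree < ((j+1 : ℕ) : WithBot ℕ) :=
      lt_of_le_of_lt (le_trans (Polynomial.degree_derivative_le) hA) hj1
    have hdb : b.derivative.degree < ((j+1 : ℕ) : WithBot ℕ) :=
      lt_of_le_of_lt (le_trans (Polynomial.degree_derivative_le) hB) hj1
    refine ⟨?_, ?_, ?_, ?_⟩
    · show (a.derivative - Polynomial.C 2 * Polynomial.X * b).degree ≤ _
      exact le_trans (Polynomial.degree_sub_le _ _) (max_le hda.le hXb)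
    · show (b.derivative + Polynomial.C 2 * Polynomial.X * a).degree ≤ _
      exact le_trans (Polynomial.degree_add_le _ _) (max_le hdb.le hXa)
    · -- j+1 even, j odd
      intro hev
      have hodd : Odd j := by
        simp only [Nat.even_iff, Nat.odd_iff] at hev ⊢; omega
      show (a.derivative - Polynomial.C 2 * Polynomial.X * b).coeff (j+1) = _
      have h1 : a.derivative.coeff (j+1) = 0 :=
        Polynomial.coeff_eq_zero_of_degree_lt hda
      have h2 : (Polynomial.C (2:ℝ) * Polynomial.X * b).coeff (j+1) = 2 * b.coeff j := by
        rw [mul_assoc, Polynomial.coeff_C_mul, Polynomial.coeff_X_mul]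
      rw [Polynomial.coeff_sub, h1, h2, hCO hodd, zero_sub]
      obtain ⟨m, hm⟩ := hodd
      subst hm
      have e1 : (2*m+1)/2 = m := by omega
      have e2 : (2*m+1+1)/2 = m+1 := by omega
      rw [e1, e2]
      ring
    · -- j+1 odd, j even
      intro hodd
      have hev : Even j := by
        simp only [Nat.even_iff, Nat.odd_iff] at hodd ⊢; omega
      show (b.derivative + Polynomial.C 2 * Polynomial.X * a).coeff (j+1) = _
      have h1 : b.derivative.coeff (j+1) = 0 :=
        Polynomial.coeff_eq_zero_of_degree_lt hdb
      have h2 : (Polynomial.C (2:ℝ) * Polynomial.X * a).coeff (j+1) = 2 * a.coeff j := by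
        rw [mul_assoc, Polynomial.coeff_C_mul, Polynomial.coeff_X_mul]
      rw [Polynomial.coeff_add, h1, h2, hCE hev, zero_add]
      obtain ⟨m, hm⟩ := hev
      subst hm
      have e1 : (m+m)/2 = m := by omega
      have e2 : (m+m+1)/2 = m := by omega
      rw [e1, e2]

lemma iteratedDeriv_exp_I_mul (i : ℕ) :
    iteratedDeriv i (fun r : ℝ => Complex.exp (Complex.I * r))
      = fun r : ℝ => Complex.I ^ i * Complex.exp (Complex.I * r) := by
  induction i with
  | zero => simp
  | succ i ih =>
    rw [iteratedDeriv_succ, ih]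
    funext r
    have h1 : HasDerivAt (fun s : ℝ => Complex.I * (s:ℂ)) Complex.I r := by
      simpa using ((hasDerivAt_id r).ofReal_comp).const_mul Complex.I
    have h2 : HasDerivAt (fun s : ℝ => Complex.I ^ i * Complex.exp (Complex.I * s))
        (Complex.I ^ i * (Complex.exp (Complex.I * r) * Complex.I)) r :=
      (h1.cexp).const_mul _
    rw [h2.deriv]
    ring

lemma norm_iteratedFDeriv_exp_I_mul_le (i : ℕ) (r : ℝ) :
    ‖iteratedFDeriv ℝ i (fun s : ℝ => Complex.exp (Complex.I * s)) r‖ ≤ 1 := by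
  rw [norm_iteratedFDeriv_eq_norm_iteratedDeriv, iteratedDeriv_exp_I_mul]
  rw [norm_mul, norm_pow, Complex.norm_I, one_pow, one_mul,
    Complex.norm_exp]
  simp

lemma norm_iteratedFDeriv_id_le {E : Type*} [NormedAddCommGroup E] [NormedSpace ℝ E]
    (i : ℕ) (x : E) :
    ‖iteratedFDeriv ℝ i (fun y : E => y) x‖ ≤ if i = 0 then ‖x‖ else if i = 1 then 1 else 0 := by
  match i with
  | 0 => simp [norm_iteratedFDeriv_zero]
  | 1 =>
    simp only [if_neg one_ne_zero, if_pos rfl]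
    have h : (fderiv ℝ (fun y : E => y)) = fun _ => ContinuousLinearMap.id ℝ E := by
      funext y; exact fderiv_id'
    calc ‖iteratedFDeriv ℝ 1 (fun y : E => y) x‖
        = ‖iteratedFDeriv ℝ 0 (fderiv ℝ (fun y : E => y)) x‖ := (norm_iteratedFDeriv_fderiv).symm
      _ = ‖ContinuousLinearMap.id ℝ E‖ := by rw [norm_iteratedFDeriv_zero, h]
      _ ≤ 1 := ContinuousLinearMap.norm_id_le
  | (m+2) =>
    simp only [if_neg (by omega : m+2 ≠ 0), if_neg (by omega : m+2 ≠ 1)]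
    have h : (fderiv ℝ (fun y : E => y)) = fun _ => ContinuousLinearMap.id ℝ E := by
      funext y; exact fderiv_id'
    calc ‖iteratedFDeriv ℝ (m+2) (fun y : E => y) x‖
        = ‖iteratedFDeriv ℝ (m+1) (fderiv ℝ (fun y : E => y)) x‖ :=
          (norm_iteratedFDeriv_fderiv).symm
      _ ≤ 0 := by rw [h, iteratedFDeriv_const_of_ne (by omega : m+1 ≠ 0)]; simp

lemma norm_iteratedFDeriv_normSq_le {E : Type*} [NormedAddCommGroup E] [InnerProductSpace ℝ E]
    (i : ℕ) (hi : 1 ≤ i) (x : E) :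
    ‖iteratedFDeriv ℝ i (fun y : E => ‖y‖^2) x‖ ≤ (2*(1+‖x‖))^i := by
  have heq : (fun y : E => ‖y‖^2) = fun y : E => (innerSL ℝ) ((fun z : E => z) y) ((fun z : E => z) y) := by
    funext y
    simp [real_inner_self_eq_norm_sq]
  rw [heq]
  have hsum := (innerSL ℝ (E := E)).norm_iteratedFDeriv_le_of_bilinear_of_le_one
    (contDiff_id (𝕜 := ℝ) (E := E) (n := (⊤ : WithTop ℕ∞))) contDiff_id x
    (le_top : (i : WithTop ℕ∞) ≤ ⊤) (norm_innerSL_le ℝ)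
  refine le_trans hsum ?_
  have hid := fun l => norm_iteratedFDeriv_id_le (E := E) l x
  have hc : ∀ l : ℕ, ‖iteratedFDeriv ℝ l (fun y : E => y) x‖ ≤ 1 + ‖x‖ := by
    intro l
    refine le_trans (hid l) ?_
    rcases l with _ | _ | l <;> simp <;> positivity
  have hnonneg : (0:ℝ) ≤ ‖x‖ := norm_nonneg x
  rcases eq_or_lt_of_le hi with h1 | h2
  · -- i = 1
    subst h1
    rw [Finset.sum_range_succ, Finset.sum_range_succ, Finset.sum_range_zero]
    simp only [zero_add, Nat.choose_self, Nat.choose_zero_right, Nat.cast_one, one_mul]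
    have h0 : ‖iteratedFDeriv ℝ 0 (fun y : E => y) x‖ = ‖x‖ := by
      rw [norm_iteratedFDeriv_zero]
    have h1' : ‖iteratedFDeriv ℝ 1 (fun y : E => y) x‖ ≤ 1 := by simpa using hid 1
    calc ‖iteratedFDeriv ℝ 0 (fun y : E => y) x‖ * ‖iteratedFDeriv ℝ (1-0) (fun y : E => y) x‖
          + ‖iteratedFDeriv ℝ 1 (fun y : E => y) x‖ * ‖iteratedFDeriv ℝ (1-1) (fun y : E => y) x‖
        ≤ ‖x‖ * 1 + 1 * ‖x‖ := by
          refine add_le_add ?_ ?_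
          · rw [h0]; exact mul_le_mul_of_nonneg_left (by simpa using h1') hnonneg
          · show _ * ‖iteratedFDeriv ℝ 0 _ x‖ ≤ _
            rw [h0]; exact mul_le_mul_of_nonneg_right h1' hnonneg
      _ ≤ (2*(1+‖x‖))^1 := by rw [pow_one]; nlinarith
  · -- 2 ≤ i
    have h2i : 2 ≤ i := h2
    have hterm : ∀ l ∈ Finset.range (i+1),
        (i.choose l : ℝ) * ‖iteratedFDeriv ℝ l (fun y : E => y) x‖ *
          ‖iteratedFDeriv ℝ (i-l) (fun y : E => y) x‖ ≤ (i.choose l : ℝ) * (1+‖x‖)^i := by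
      intro l _
      have hx1 : (1:ℝ) ≤ 1 + ‖x‖ := by linarith
      calc (i.choose l : ℝ) * ‖iteratedFDeriv ℝ l (fun y : E => y) x‖ *
            ‖iteratedFDeriv ℝ (i-l) (fun y : E => y) x‖
          ≤ (i.choose l : ℝ) * (1+‖x‖) * (1+‖x‖) := by
            refine mul_le_mul (mul_le_mul_of_nonneg_left (hc l) (by positivity)) (hc (i-l))
              (norm_nonneg _) (by positivity)
        _ = (i.choose l : ℝ) * (1+‖x‖)^2 := by ring
        _ ≤ (i.choose l : ℝ) * (1+‖x‖)^i :=
            mul_le_mul_of_nonneg_left (pow_le_pow_right₀ hx1 h2i) (by positivity)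
    refine le_trans (Finset.sum_le_sum hterm) ?_
    rw [← Finset.sum_mul]
    have : (∑ l ∈ Finset.range (i+1), (i.choose l : ℝ)) = (2:ℝ)^i := by
      rw [← Nat.cast_sum, Nat.sum_range_choose]
      push_cast; ring
    rw [this, mul_pow]

/-! ### Main theorem -/

/-- For `n ≥ 1`, the function `f(x) = exp(i‖x‖²)` is smooth, belongs to `𝒪_M`
(for every order `j` there is `k` such that `(1+‖x‖²)^{-k}·iteratedFDeriv ℝ j f x` tends to `0`
at infinity), but does not belong to `𝒪_C` (there is no single `k` working for all orders `j`
simultaneously). -/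
theorem exp_i_norm_sq_slowly_but_not_very_slowly_increasing (n : ℕ) (hn : 1 ≤ n)
    (f : EuclideanSpace ℝ (Fin n) → ℂ)
    (hf : ∀ x : EuclideanSpace ℝ (Fin n), f x = Complex.exp (Complex.I * ((‖x‖ ^ 2 : ℝ) : ℂ))) :
    ContDiff ℝ (⊤ : ℕ∞) f ∧
    (∀ j : ℕ, ∃ k : ℕ, Tendsto
      (fun x : EuclideanSpace ℝ (Fin n) => ((1 + ‖x‖ ^ 2) ^ k)⁻¹ * ‖iteratedFDeriv ℝ j f x‖)
      (cocompact (EuclideanSpace ℝ (Fin n))) (nhds 0)) ∧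
    ¬ (∃ k : ℕ, ∀ j : ℕ, Tendsto
      (fun x : EuclideanSpace ℝ (Fin n) => ((1 + ‖x‖ ^ 2) ^ k)⁻¹ * ‖iteratedFDeriv ℝ j f x‖)
      (cocompact (EuclideanSpace ℝ (Fin n))) (nhds 0)) := by
  have hfeq : f = (fun r : ℝ => Complex.exp (Complex.I * r)) ∘ (fun y : EuclideanSpace ℝ (Fin n) => ‖y‖^2) := by
    funext x
    rw [hf]
    rfl
  have hG : ContDiff ℝ (⊤ : ℕ∞) (fun r : ℝ => Complex.exp (Complex.I * r)) := by
    apply Complex.contDiff_exp.comp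
    exact contDiff_const.mul Complex.ofRealCLM.contDiff
  have hsmooth : ContDiff ℝ (⊤ : ℕ∞) f := by
    rw [hfeq]
    exact hG.comp (contDiff_norm_sq ℝ)
  refine ⟨hsmooth, ?_, ?_⟩
  · -- part 2 : 𝒪_M
    intro j
    refine ⟨j + 1, ?_⟩
    have hb : ∀ x : EuclideanSpace ℝ (Fin n), ‖iteratedFDeriv ℝ j f x‖ ≤ (Nat.factorial j : ℝ) * 1 * (2*(1+‖x‖))^j := by
      intro x
      rw [hfeq]
      refine norm_iteratedFDeriv_comp_le hG (contDiff_norm_sq ℝ) (by exact_mod_cast le_top) x ?_ ?_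
      · intro i _
        exact norm_iteratedFDeriv_exp_I_mul_le i _
      · intro i hi1 _
        exact norm_iteratedFDeriv_normSq_le i hi1 x
    set φ : ℝ → ℝ := fun r => ((Nat.factorial j : ℝ) * 2^j) * (((1+r)/(1+r^2))^j * (1+r^2)⁻¹) with hφdef
    have hA : Tendsto (fun r : ℝ => (1+r)/(1+r^2)) atTop (nhds 0) := by
      have hd : (Polynomial.X + Polynomial.C (1:ℝ)).degree
          < (Polynomial.X^2 + Polynomial.C (1:ℝ)).degree := by
        rw [Polynomial.degree_X_add_C, Polynomial.degree_X_pow_add_C (by norm_num : 0 < 2)]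
        norm_num
      have := Polynomial.div_tendsto_zero_of_degree_lt
        (Polynomial.X + Polynomial.C (1:ℝ)) (Polynomial.X^2 + Polynomial.C 1) hd
      have heq2 : (fun r : ℝ => (1+r)/(1+r^2))
          = fun r : ℝ => Polynomial.eval r (Polynomial.X + Polynomial.C (1:ℝ))
            / Polynomial.eval r (Polynomial.X^2 + Polynomial.C 1) := by
        funext r; simp [add_comm]
      rw [heq2]
      exact this
    have hB : Tendsto (fun r : ℝ => ((1:ℝ)+r^2)⁻¹) atTop (nhds 0) := by
      apply tendsto_inv_atTop_zero.comp
      exact tendsto_atTop_add_const_left atTop 1 (tendsto_pow_atTop (by norm_num : (2:ℕ) ≠ 0))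
    have hφ : Tendsto φ atTop (nhds 0) := by
      have := ((hA.pow j).mul hB).const_mul ((Nat.factorial j : ℝ) * 2^j)
      simpa using this
    refine squeeze_zero (fun x => by positivity) (fun x => ?_)
      (hφ.comp tendsto_norm_cocompact_atTop)
    have hP : (0:ℝ) < 1 + ‖x‖^2 := by positivity
    calc ((1 + ‖x‖ ^ 2) ^ (j+1))⁻¹ * ‖iteratedFDeriv ℝ j f x‖
        ≤ ((1 + ‖x‖ ^ 2) ^ (j+1))⁻¹ * ((Nat.factorial j : ℝ) * 1 * (2*(1+‖x‖))^j) :=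
          mul_le_mul_of_nonneg_left (hb x) (by positivity)
      _ = φ ‖x‖ := by
          rw [hφdef, mul_pow 2 (1+‖x‖) j]
          show _ = (j.factorial : ℝ) * 2 ^ j * (((1 + ‖x‖) / (1 + ‖x‖ ^ 2)) ^ j * (1 + ‖x‖ ^ 2)⁻¹)
          rw [div_pow, pow_succ]
          field_simp
  · -- part 3 : not 𝒪_C
    rintro ⟨k, hk⟩
    obtain ⟨hA, -, hCE, -⟩ := expISqPoly_spec (2*k+2)
    set a := (expISqPoly (2*k+2)).1 with ha
    have hcoef : a.coeff (2*k+2) = (-4:ℝ)^(k+1) := by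
      have := hCE ⟨k+1, by ring⟩
      rwa [show (2*k+2)/2 = k+1 by omega] at this
    have ha0 : a.coeff (2*k+2) ≠ 0 := by
      rw [hcoef]
      exact pow_ne_zero _ (by norm_num)
    have hdeg : a.degree = ((2*k+2 : ℕ) : WithBot ℕ) :=
      le_antisymm hA (Polynomial.le_degree_of_ne_zero ha0)
    set Q : Polynomial ℝ := (Polynomial.X^2 + Polynomial.C 1)^k with hQ
    have hbase_ne : (Polynomial.X^2 + Polynomial.C (1:ℝ)) ≠ 0 := by
      intro h
      have h2 := Polynomial.degree_X_pow_add_C (R := ℝ) (by norm_num : 0 < 2) (1:ℝ)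
      rw [h] at h2
      simp at h2
    have hQne : Q ≠ 0 := pow_ne_zero _ hbase_ne
    have hQdeg : Q.degree = ((2*k : ℕ) : WithBot ℕ) := by
      rw [hQ, Polynomial.degree_pow, Polynomial.degree_X_pow_add_C (by norm_num : 0 < 2)]
      rw [nsmul_eq_mul]
      norm_cast
      omega
    have hlt : Q.degree < a.degree := by
      rw [hQdeg, hdeg]
      exact_mod_cast (by omega : 2*k < 2*k+2)
    have htend : Tendsto (fun t : ℝ => |a.eval t / Q.eval t|) atTop atTop :=
      Polynomial.abs_div_tendsto_atTop_of_degree_gt a Q hlt hQne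
    -- the ray
    set e : EuclideanSpace ℝ (Fin n) := EuclideanSpace.single (⟨0, hn⟩ : Fin n) (1:ℝ) with he_def
    have he : ‖e‖ = 1 := by simp [he_def]
    set L : ℝ →L[ℝ] EuclideanSpace ℝ (Fin n) := ContinuousLinearMap.toSpanSingleton ℝ e with hL_def
    have hLapp : ∀ t : ℝ, L t = t • e := fun t => rfl
    have hLnorm : ∀ t : ℝ, ‖L t‖ = |t| := by
      intro t
      rw [hLapp, norm_smul, he, mul_one, Real.norm_eq_abs]
    have hL : Tendsto L atTop (cocompact (EuclideanSpace ℝ (Fin n))) := by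
      apply tendsto_cocompact_of_tendsto_dist_comp_atTop (0 : EuclideanSpace ℝ (Fin n))
      simp only [dist_zero_right]
      simp only [hLnorm]
      exact tendsto_abs_atTop_atTop
    have hcomp : Tendsto
        (fun t : ℝ => ((1 + ‖L t‖ ^ 2) ^ k)⁻¹ * ‖iteratedFDeriv ℝ (2*k+2) f (L t)‖)
        atTop (nhds 0) := (hk (2*k+2)).comp hL
    -- pointwise lower bound
    have hcompfun : f ∘ L = fun s : ℝ => Complex.exp (Complex.I * (s:ℂ)^2) := by
      funext s
      rw [Function.comp_apply, hf]
      congr 1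
      rw [hLnorm s, sq_abs]
      push_cast
      ring
    have hge : ∀ t : ℝ, |a.eval t / Q.eval t|
        ≤ ((1 + ‖L t‖ ^ 2) ^ k)⁻¹ * ‖iteratedFDeriv ℝ (2*k+2) f (L t)‖ := by
      intro t
      have hQeval : Q.eval t = (1 + t^2)^k := by
        simp [hQ, add_comm]
      have hQpos : (0:ℝ) < Q.eval t := by rw [hQeval]; positivity
      have step1 : ‖iteratedFDeriv ℝ (2*k+2) (f ∘ L) t‖
          ≤ ‖iteratedFDeriv ℝ (2*k+2) f (L t)‖ := by
        rw [L.iteratedFDeriv_comp_right hsmooth t (WithTop.coe_le_coe.mpr (le_top : ((2*k+2 : ℕ) : ℕ∞) ≤ ⊤))]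
        refine le_trans (ContinuousMultilinearMap.norm_compContinuousLinearMap_le _ _) ?_
        simp [hL_def, ContinuousLinearMap.norm_toSpanSingleton, he]
      have step2 : |a.eval t| ≤ ‖iteratedFDeriv ℝ (2*k+2) (f ∘ L) t‖ := by
        rw [norm_iteratedFDeriv_eq_norm_iteratedDeriv, hcompfun,
          expISqPoly_iteratedDeriv (2*k+2) t]
        rw [norm_mul]
        have hexp : ‖Complex.exp (Complex.I * (t:ℂ)^2)‖ = 1 := by
          rw [Complex.norm_exp]
          simp [Complex.mul_re, ← Complex.ofReal_pow]
        rw [hexp, mul_one]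
        have := Complex.abs_re_le_norm
          ((((a.eval t : ℝ) : ℂ)) + (((expISqPoly (2*k+2)).2.eval t : ℝ) : ℂ) * Complex.I)
        simpa using this
      have hnormLt : ‖L t‖^2 = t^2 := by rw [hLnorm, sq_abs]
      rw [abs_div, abs_of_pos hQpos, div_eq_inv_mul, hQeval, hnormLt]
      exact mul_le_mul_of_nonneg_left (le_trans step2 step1) (by positivity)
    have h1 := htend.eventually_ge_atTop 1
    have h2 : ∀ᶠ t in atTop,
        ((1 + ‖L t‖ ^ 2) ^ k)⁻¹ * ‖iteratedFDeriv ℝ (2*k+2) f (L t)‖ < 1 :=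
      hcomp.eventually_lt_const one_pos
    obtain ⟨t, ht1, ht2⟩ := (h1.and h2).exists
    linarith [hge t]
end

section
/- Let 1 ≤ p < ∞. If f : ℝⁿ → ℂ is smooth and for every order j the function x ↦ iteratedFDeriv ℝ j f x belongs to L^p (with respect to Lebesgue measure), and g : ℝⁿ → ℂ is smooth with iteratedFDeriv ℝ j g bounded on ℝⁿ for every order j, then for every order j the function x ↦ iteratedFDeriv ℝ j (f·g) x belongs to L^p. In other words, 𝒟_{L^∞} multiplies 𝒟_{L^p} into 𝒟_{L^p}. -/
open Filter MeasureTheory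
open scoped ENNReal

set_option synthInstance.maxHeartbeats 1000000 in
/-- If all iterated derivatives of the smooth function `f : ℝⁿ → ℂ` belong to `L^p`
(`1 ≤ p < ∞`) and all iterated derivatives of the smooth function `g : ℝⁿ → ℂ` are bounded,
then all iterated derivatives of the pointwise product `f·g` belong to `L^p`;
i.e. `𝒟_{L^∞}` multiplies `𝒟_{L^p}` into `𝒟_{L^p}`. -/
theorem mul_memLp_of_derivs_memLp_of_derivs_bounded (n : ℕ) (p : ℝ≥0∞)
    (hp1 : 1 ≤ p) (hp2 : p ≠ ⊤) (f g : EuclideanSpace ℝ (Fin n) → ℂ)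
    (hf : ContDiff ℝ (⊤ : ℕ∞) f) (hg : ContDiff ℝ (⊤ : ℕ∞) g)
    (hfp : ∀ j : ℕ, MemLp (fun x => iteratedFDeriv ℝ j f x) p volume)
    (hgb : ∀ j : ℕ, ∃ C : ℝ, ∀ x : EuclideanSpace ℝ (Fin n), ‖iteratedFDeriv ℝ j g x‖ ≤ C) :
    ∀ j : ℕ, MemLp (fun x => iteratedFDeriv ℝ j (fun y => f y * g y) x) p volume := by
  intro j
  choose C hC using hgb
  have hsum : MemLp (fun x => ∑ i ∈ Finset.range (j+1),
      ((j.choose i : ℝ) * C (j - i)) * ‖iteratedFDeriv ℝ i f x‖) p volume := by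
    apply memLp_finset_sum
    intro i _
    exact ((hfp i).norm.const_mul _)
  refine hsum.of_le ?_ ?_
  · exact ((hf.mul hg).continuous_iteratedFDeriv (by exact_mod_cast le_top)).aestronglyMeasurable
  · filter_upwards with x
    have h1 : ‖iteratedFDeriv ℝ j (fun y => f y * g y) x‖ ≤
        ∑ i ∈ Finset.range (j+1),
          (j.choose i : ℝ) * ‖iteratedFDeriv ℝ i f x‖ * ‖iteratedFDeriv ℝ (j-i) g x‖ :=
      norm_iteratedFDeriv_mul_le hf hg x (by exact_mod_cast le_top)
    have h2 : ∀ i ∈ Finset.range (j+1),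
        (j.choose i : ℝ) * ‖iteratedFDeriv ℝ i f x‖ * ‖iteratedFDeriv ℝ (j-i) g x‖ ≤
        ((j.choose i : ℝ) * C (j - i)) * ‖iteratedFDeriv ℝ i f x‖ := by
      intro i _
      rw [mul_right_comm]
      gcongr
      exact hC (j - i) x
    have h3 : (0:ℝ) ≤ ∑ i ∈ Finset.range (j+1),
        ((j.choose i : ℝ) * C (j - i)) * ‖iteratedFDeriv ℝ i f x‖ :=
      le_trans (norm_nonneg _) (h1.trans (Finset.sum_le_sum h2))
    rw [Real.norm_of_nonneg h3]
    exact h1.trans (Finset.sum_le_sum h2)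
end

section
/- If f : ℝⁿ → ℂ is smooth and for every order j the function x ↦ ‖iteratedFDeriv ℝ j f x‖ tends to 0 at infinity, and g : ℝⁿ → ℂ is smooth with iteratedFDeriv ℝ j g bounded on ℝⁿ for every order j, then for every order j the function x ↦ ‖iteratedFDeriv ℝ j (f·g) x‖ tends to 0 at infinity. In other words, 𝒟_{L^∞} multiplies Ḃ into Ḃ. -/
open Filter

/-- If `f : ℝⁿ → ℂ` is smooth with all iterated derivatives tending to `0` at infinity
(i.e. `f ∈ Ḃ`) and `g : ℝⁿ → ℂ` is smooth with all iterated derivatives bounded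
(i.e. `g ∈ 𝒟_{L^∞}`), then all iterated derivatives of the pointwise product `f·g`
tend to `0` at infinity; i.e. `𝒟_{L^∞}` multiplies `Ḃ` into `Ḃ`. -/
theorem mul_derivs_vanish_at_infty_of_derivs_bounded (n : ℕ)
    (f g : EuclideanSpace ℝ (Fin n) → ℂ)
    (hf : ContDiff ℝ (⊤ : ℕ∞) f) (hg : ContDiff ℝ (⊤ : ℕ∞) g)
    (hf0 : ∀ j : ℕ, Tendsto (fun x : EuclideanSpace ℝ (Fin n) => ‖iteratedFDeriv ℝ j f x‖)
      (cocompact (EuclideanSpace ℝ (Fin n))) (nhds 0))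
    (hgb : ∀ j : ℕ, ∃ C : ℝ, ∀ x : EuclideanSpace ℝ (Fin n), ‖iteratedFDeriv ℝ j g x‖ ≤ C) :
    ∀ j : ℕ, Tendsto
      (fun x : EuclideanSpace ℝ (Fin n) => ‖iteratedFDeriv ℝ j (fun y => f y * g y) x‖)
      (cocompact (EuclideanSpace ℝ (Fin n))) (nhds 0) := by
  intro j
  have hsum : Tendsto (fun x : EuclideanSpace ℝ (Fin n) =>
      ∑ i ∈ Finset.range (j + 1),
        (j.choose i : ℝ) * ‖iteratedFDeriv ℝ i f x‖ * ‖iteratedFDeriv ℝ (j - i) g x‖)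
      (cocompact (EuclideanSpace ℝ (Fin n))) (nhds 0) := by
    have h0 : (0 : ℝ) = ∑ i ∈ Finset.range (j + 1), (0 : ℝ) := by simp
    rw [h0]
    refine tendsto_finset_sum _ fun i _ => ?_
    obtain ⟨C, hC⟩ := hgb (j - i)
    have hM : ∀ x, ‖iteratedFDeriv ℝ (j - i) g x‖ ≤ max C 0 :=
      fun x => (hC x).trans (le_max_left _ _)
    have hlim : Tendsto (fun x : EuclideanSpace ℝ (Fin n) =>
        (j.choose i : ℝ) * ‖iteratedFDeriv ℝ i f x‖ * max C 0)
        (cocompact (EuclideanSpace ℝ (Fin n))) (nhds 0) := by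
      have := ((hf0 i).const_mul (j.choose i : ℝ)).mul_const (max C 0)
      simpa using this
    refine squeeze_zero (fun x => ?_) (fun x => ?_) hlim
    · positivity
    · exact mul_le_mul_of_nonneg_left (hM x) (by positivity)
  refine squeeze_zero (fun x => norm_nonneg _) (fun x => ?_) hsum
  exact norm_iteratedFDeriv_mul_le hf hg x (by exact_mod_cast le_top)
end

section
/- Let 1 ≤ p < ∞. If f, g : ℝⁿ → ℂ are smooth and for every order j both iteratedFDeriv ℝ j f and iteratedFDeriv ℝ j g belong to L^p (with respect to Lebesgue measure), then for every order j the function iteratedFDeriv ℝ j (f·g) belongs to L^p; i.e. the pointwise multiplication 𝒟_{L^p} × 𝒟_{L^p} → 𝒟_{L^p} is well-defined. -/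
open Filter MeasureTheory Set Function
open scoped ENNReal

variable {n : ℕ} {F : Type*} [NormedAddCommGroup F] [NormedSpace ℝ F] [CompleteSpace F]

lemma step1 (v : (Fin n → ℝ) → F) (hv : ContDiff ℝ 1 v) (i : Fin n) (z : Fin n → ℝ)
    (hz : z i = 0) :
    (‖v z‖₊ : ℝ≥0∞) ≤ ∫⁻ t in Icc (0:ℝ) 1,
      ((‖v (Function.update z i t)‖₊ : ℝ≥0∞) + (‖fderiv ℝ v (Function.update z i t)‖₊ : ℝ≥0∞)) := by
  have hγ : ∀ s : ℝ, Function.update z i s = z + s • (Pi.single i (1:ℝ) : Fin n → ℝ) := by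
    intro s
    funext k
    rcases eq_or_ne k i with rfl | hk
    · simp [hz]
    · simp [Function.update_apply, hk, Pi.single_apply, Ne.symm hk]
  have hγc : Continuous (fun s : ℝ => Function.update z i s) := by
    simp only [hγ]
    exact continuous_const.add (continuous_id.smul continuous_const)
  have hcfd : Continuous fun s : ℝ => fderiv ℝ v (Function.update z i s) :=
    (hv.continuous_fderiv one_ne_zero).comp hγc
  set d : ℝ → F :=
    fun s => fderiv ℝ v (Function.update z i s) (Pi.single i (1:ℝ) : Fin n → ℝ) with hd_def
  have hvd : Differentiable ℝ v := hv.differentiable one_ne_zero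
  have hd : ∀ s : ℝ, HasDerivAt (fun s => v (Function.update z i s)) (d s) s := by
    intro s
    have h1 : HasDerivAt (fun s : ℝ => Function.update z i s)
        ((Pi.single i (1:ℝ) : Fin n → ℝ)) s := by
      simp only [hγ]
      simpa using ((hasDerivAt_id s).smul_const (Pi.single i (1:ℝ) : Fin n → ℝ)).const_add z
    exact ((hvd _).hasFDerivAt.comp_hasDerivAt s h1)
  have hdc : Continuous d := hcfd.clm_apply continuous_const
  have hsingle : ‖(Pi.single i (1:ℝ) : Fin n → ℝ)‖ ≤ 1 := by
    rw [pi_norm_le_iff_of_nonneg zero_le_one]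
    intro k
    rcases eq_or_ne k i with rfl | hk
    · simp
    · simp [Pi.single_apply, hk]
  have hdle : ∀ s : ℝ, ‖d s‖ ≤ ‖fderiv ℝ v (Function.update z i s)‖ := by
    intro s
    have h1 := (fderiv ℝ v (Function.update z i s)).le_opNorm
      (Pi.single i (1:ℝ) : Fin n → ℝ)
    have h2 := norm_nonneg (fderiv ℝ v (Function.update z i s))
    nlinarith
  set I : ℝ := ∫ s in (0:ℝ)..1, ‖d s‖ with hI_def
  have hI0 : 0 ≤ I := intervalIntegral.integral_nonneg zero_le_one fun s _ => norm_nonneg _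
  have key : ∀ t ∈ Icc (0:ℝ) 1, ‖v z‖ ≤ ‖v (Function.update z i t)‖ + I := by
    intro t ht
    have hftc : ∫ s in (0:ℝ)..t, d s
        = v (Function.update z i t) - v (Function.update z i 0) :=
      intervalIntegral.integral_eq_sub_of_hasDerivAt (fun s _ => hd s)
        (hdc.intervalIntegrable 0 t)
    have hz0 : Function.update z i 0 = z := by rw [← hz]; exact Function.update_eq_self i z
    have h1 : ‖v z‖ ≤ ‖v (Function.update z i t)‖ + ‖∫ s in (0:ℝ)..t, d s‖ := by
      have hvz : v z = v (Function.update z i t) - ∫ s in (0:ℝ)..t, d s := by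
        rw [hftc, hz0]; abel
      rw [hvz]
      exact norm_sub_le _ _
    have h2 : ‖∫ s in (0:ℝ)..t, d s‖ ≤ I := by
      calc ‖∫ s in (0:ℝ)..t, d s‖ ≤ ∫ s in (0:ℝ)..t, ‖d s‖ :=
            intervalIntegral.norm_integral_le_integral_norm ht.1
        _ ≤ I := by
            apply intervalIntegral.integral_mono_interval le_rfl ht.1 ht.2
            · exact Eventually.of_forall fun s => norm_nonneg _
            · exact hdc.norm.intervalIntegrable 0 1
    linarith
  have hIcc1 : volume (Icc (0:ℝ) 1) = 1 := by simp [Real.volume_Icc]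
  have hIbound : ENNReal.ofReal I
      ≤ ∫⁻ t in Icc (0:ℝ) 1, (‖fderiv ℝ v (Function.update z i t)‖₊ : ℝ≥0∞) := by
    have hIle : I ≤ ∫ s in (0:ℝ)..1, ‖fderiv ℝ v (Function.update z i s)‖ := by
      apply intervalIntegral.integral_mono_on zero_le_one (hdc.norm.intervalIntegrable 0 1)
        (hcfd.norm.intervalIntegrable 0 1)
      intro s _
      exact hdle s
    calc ENNReal.ofReal I
        ≤ ENNReal.ofReal (∫ s in (0:ℝ)..1, ‖fderiv ℝ v (Function.update z i s)‖) :=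
          ENNReal.ofReal_le_ofReal hIle
      _ = ∫⁻ s in Ioc (0:ℝ) 1, (‖fderiv ℝ v (Function.update z i s)‖₊ : ℝ≥0∞) := by
          rw [intervalIntegral.integral_of_le zero_le_one,
            ofReal_integral_eq_lintegral_ofReal
              (hcfd.norm.integrableOn_Icc.mono_set Ioc_subset_Icc_self)
              (Eventually.of_forall fun s => norm_nonneg _)]
          simp_rw [ofReal_norm, enorm_eq_nnnorm]
      _ ≤ _ := lintegral_mono_set Ioc_subset_Icc_self
  calc (‖v z‖₊ : ℝ≥0∞)
      = ∫⁻ _ in Icc (0:ℝ) 1, (‖v z‖₊ : ℝ≥0∞) := by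
        rw [setLIntegral_const, hIcc1, mul_one]
    _ ≤ ∫⁻ t in Icc (0:ℝ) 1, ((‖v (Function.update z i t)‖₊ : ℝ≥0∞) + ENNReal.ofReal I) := by
        apply setLIntegral_mono' measurableSet_Icc
        intro t ht
        calc (‖v z‖₊ : ℝ≥0∞) = ENNReal.ofReal ‖v z‖ := (ofReal_norm _).symm
          _ ≤ ENNReal.ofReal (‖v (Function.update z i t)‖ + I) :=
              ENNReal.ofReal_le_ofReal (key t ht)
          _ = _ := by rw [ENNReal.ofReal_add (norm_nonneg _) hI0, ofReal_norm, enorm_eq_nnnorm]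
    _ ≤ _ := by
        rw [lintegral_add_right _ measurable_const, setLIntegral_const, hIcc1, mul_one,
          lintegral_add_right _
            (g := fun t => (‖fderiv ℝ v (Function.update z i t)‖₊ : ℝ≥0∞)) hcfd.measurable.enorm]
        exact add_le_add_right hIbound _


section aux
variable {n : ℕ} {F : Type*} [NormedAddCommGroup F] [NormedSpace ℝ F] [CompleteSpace F]

lemma cube_eq (n : ℕ) :
    Measure.pi (fun _ : Fin n => volume.restrict (Icc (0:ℝ) 1))
      = volume.restrict (Set.univ.pi fun _ : Fin n => Icc (0:ℝ) 1) := by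
  refine Measure.pi_eq fun s hs => ?_
  rw [Measure.restrict_apply (MeasurableSet.univ_pi hs)]
  have h1 : Set.univ.pi s ∩ Set.univ.pi (fun _ : Fin n => Icc (0:ℝ) 1)
      = Set.univ.pi (fun k => s k ∩ Icc (0:ℝ) 1) := by
    rw [← Set.pi_inter_distrib]
  rw [h1, volume_pi_pi]
  exact Finset.prod_congr rfl fun k _ => (Measure.restrict_apply (hs k)).symm
end aux

section mainpi
variable {n : ℕ} {F : Type*} [NormedAddCommGroup F] [NormedSpace ℝ F] [CompleteSpace F]


set_option maxHeartbeats 1000000 in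
set_option synthInstance.maxHeartbeats 200000 in
lemma main_pi {p : ℝ≥0∞} (hp1 : 1 ≤ p) (u : (Fin n → ℝ) → F) (hu : ContDiff ℝ (⊤ : ℕ∞) u)
    (hLp : ∀ j : ℕ, MemLp (iteratedFDeriv ℝ j u) p volume) (i : ℕ) :
    ∃ C : ℝ, 0 ≤ C ∧ ∀ x, ‖iteratedFDeriv ℝ i u x‖ ≤ C := by
  classical
  set ν : Fin n → Measure ℝ := fun _ => volume.restrict (Icc (0:ℝ) 1) with hν
  haveI hprob : ∀ k : Fin n, IsProbabilityMeasure (ν k) := fun k =>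
    ⟨by simp [hν, Real.volume_Icc]⟩
  have hcont : ∀ k : ℕ, Continuous (iteratedFDeriv ℝ k u) := fun k =>
    hu.continuous_iteratedFDeriv (by exact_mod_cast le_top)
  have hC1 : ∀ k : ℕ, ContDiff ℝ 1 (iteratedFDeriv ℝ k u) := fun k =>
    hu.iteratedFDeriv_right (by exact_mod_cast le_top)
  set B : ℝ≥0∞ := 2^n * ∑ j ∈ Finset.range (n+1),
      eLpNorm (iteratedFDeriv ℝ (i+j) u) p volume with hB_def
  have hB : B ≠ ⊤ := by
    apply ENNReal.mul_ne_top
    · exact ENNReal.pow_ne_top (by norm_num)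
    · exact ENNReal.sum_ne_top.2 fun j _ => (hLp (i+j)).2.ne
  have hmain : ∀ x : Fin n → ℝ, (‖iteratedFDeriv ℝ i u x‖₊ : ℝ≥0∞) ≤ B := by
    intro x
    set G : ℕ → (Fin n → ℝ) → ℝ≥0∞ :=
      fun j y => (‖iteratedFDeriv ℝ (i+j) u (x + y)‖₊ : ℝ≥0∞) with hG_def
    have hGm : ∀ j, Measurable (G j) := fun j =>
      measurable_coe_nnreal_ennreal.comp
        ((hcont (i+j)).comp (continuous_const.add continuous_id)).nnnorm.measurable
    set S : ℕ → (Fin n → ℝ) → ℝ≥0∞ :=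
      fun m y => 2^m * ∑ j ∈ Finset.range (m+1), G j y with hS_def
    have hSm : ∀ m, Measurable (S m) := fun m =>
      (Finset.measurable_sum _ fun j _ => hGm j).const_mul _
    have hstep : ∀ (m : ℕ) (k : Fin n) (z : Fin n → ℝ), z k = 0 →
        S m z ≤ ∫⁻ t in Icc (0:ℝ) 1, S (m+1) (Function.update z k t) := by
      intro m k z hzk
      have hterm : ∀ j : ℕ, G j z ≤ ∫⁻ t in Icc (0:ℝ) 1,
          (G j (Function.update z k t) + G (j+1) (Function.update z k t)) := by
        intro j
        have hvC : ContDiff ℝ 1 (fun y => iteratedFDeriv ℝ (i+j) u (x + y)) :=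
          (hC1 (i+j)).comp (contDiff_const.add contDiff_id)
        have hfd : ∀ y : Fin n → ℝ, fderiv ℝ (fun y => iteratedFDeriv ℝ (i+j) u (x + y)) y
            = fderiv ℝ (iteratedFDeriv ℝ (i+j) u) (x + y) := by
          intro y
          have h1 : HasFDerivAt (fun y : Fin n → ℝ => x + y)
              (ContinuousLinearMap.id ℝ (Fin n → ℝ)) y := (hasFDerivAt_id y).const_add x
          have h2 : HasFDerivAt (iteratedFDeriv ℝ (i+j) u)
              (fderiv ℝ (iteratedFDeriv ℝ (i+j) u) (x+y)) (x+y) :=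
            (((hC1 (i+j)).differentiable one_ne_zero) _).hasFDerivAt
          have h3 := (h2.comp y h1).fderiv
          exact h3
        have h := step1 _ hvC k z hzk
        refine le_trans (le_of_eq rfl) (le_trans h (lintegral_mono fun t => ?_))
        apply add_le_add le_rfl
        apply le_of_eq
        show (‖fderiv ℝ (fun y => iteratedFDeriv ℝ (i+j) u (x + y)) (Function.update z k t)‖₊ : ℝ≥0∞)
          = (‖iteratedFDeriv ℝ (i+j+1) u (x + Function.update z k t)‖₊ : ℝ≥0∞)
        rw [hfd, ← enorm_eq_nnnorm, ← enorm_eq_nnnorm, ← ofReal_norm, ← ofReal_norm,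
          norm_fderiv_iteratedFDeriv]
      have hsum : ∀ w, ∑ j ∈ Finset.range (m+1), (G j w + G (j+1) w)
          ≤ 2 * ∑ j ∈ Finset.range (m+2), G j w := by
        intro w
        rw [Finset.sum_add_distrib, two_mul]
        apply add_le_add
        · exact Finset.sum_le_sum_of_subset (Finset.range_subset_range.2 (by omega))
        · rw [Finset.sum_range_succ' (fun j => G j w) (m+1)]
          exact le_self_add
      calc S m z = 2^m * ∑ j ∈ Finset.range (m+1), G j z := rfl
        _ ≤ 2^m * ∑ j ∈ Finset.range (m+1), ∫⁻ t in Icc (0:ℝ) 1,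
              (G j (Function.update z k t) + G (j+1) (Function.update z k t)) := by
            gcongr with j hj
            exact hterm j
        _ = 2^m * ∫⁻ t in Icc (0:ℝ) 1, ∑ j ∈ Finset.range (m+1),
              (G j (Function.update z k t) + G (j+1) (Function.update z k t)) := by
            rw [lintegral_finset_sum]
            intro j _
            exact ((hGm j).comp (measurable_update z)).add
              ((hGm (j+1)).comp (measurable_update z))
        _ ≤ 2^m * ∫⁻ t in Icc (0:ℝ) 1, 2 * ∑ j ∈ Finset.range (m+2),
              G j (Function.update z k t) := by
            refine mul_le_mul' le_rfl (lintegral_mono fun t => hsum _)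
        _ = ∫⁻ t in Icc (0:ℝ) 1, S (m+1) (Function.update z k t) := by
            rw [← lintegral_const_mul]
            · refine lintegral_congr fun t => ?_
              show (2:ℝ≥0∞)^m * (2 * ∑ j ∈ Finset.range (m+2), G j (Function.update z k t))
                = 2^(m+1) * ∑ j ∈ Finset.range (m+2), G j (Function.update z k t)
              rw [pow_succ, mul_assoc]
            · exact (Finset.measurable_sum _ fun j _ =>
                (hGm j).comp (measurable_update z)).const_mul 2
    have claim : ∀ s : Finset (Fin n), ∀ (m : ℕ) (z : Fin n → ℝ),
        (∀ k ∈ s, z k = 0) → S m z ≤ MeasureTheory.lmarginal ν s (S (m + s.card)) z := by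
      intro s
      induction s using Finset.induction_on with
      | empty => intro m z _; simp [MeasureTheory.lmarginal_empty]
      | @insert k s hk ih =>
        intro m z hzz
        have hzk : z k = 0 := hzz k (Finset.mem_insert_self k s)
        have h2 : ∀ t : ℝ, S (m+1) (Function.update z k t)
            ≤ MeasureTheory.lmarginal ν s (S (m+1+s.card)) (Function.update z k t) := by
          intro t
          apply ih (m+1)
          intro k' hk'
          rw [Function.update_apply]
          have hne : k' ≠ k := fun h => hk (h ▸ hk')
          rw [if_neg hne]
          exact hzz k' (Finset.mem_insert_of_mem hk')
        calc S m z ≤ ∫⁻ t in Icc (0:ℝ) 1, S (m+1) (Function.update z k t) := hstep m k z hzk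
          _ ≤ ∫⁻ t in Icc (0:ℝ) 1,
                MeasureTheory.lmarginal ν s (S (m+1+s.card)) (Function.update z k t) :=
              lintegral_mono fun t => h2 t
          _ = ∫⁻ t, MeasureTheory.lmarginal ν s (S (m+1+s.card)) (Function.update z k t) ∂(ν k) :=
              rfl
          _ = MeasureTheory.lmarginal ν (insert k s) (S (m+1+s.card)) z :=
              (MeasureTheory.lmarginal_insert _ (hSm _) hk z).symm
          _ = MeasureTheory.lmarginal ν (insert k s) (S (m + (insert k s).card)) z := by
              rw [Finset.card_insert_of_notMem hk,
                show m + (s.card + 1) = m + 1 + s.card by omega]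
    haveI : IsProbabilityMeasure (Measure.pi ν) :=
      ⟨by
        rw [Measure.pi_univ]
        exact Finset.prod_eq_one fun k _ => (hprob k).measure_univ⟩
    have h0 := claim Finset.univ 0 0 (fun k _ => rfl)
    have hS00 : S 0 0 = (‖iteratedFDeriv ℝ i u x‖₊ : ℝ≥0∞) := by
      simp [hS_def, hG_def]
    have hcard : 0 + (Finset.univ : Finset (Fin n)).card = n := by simp
    rw [hS00, hcard, MeasureTheory.lmarginal_univ] at h0
    refine h0.trans ?_
    have hjbound : ∀ j : ℕ, ∫⁻ y, G j y ∂(Measure.pi ν)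
        ≤ eLpNorm (iteratedFDeriv ℝ (i+j) u) p volume := by
      intro j
      have hmp : MeasurePreserving (fun y : Fin n → ℝ => x + y) volume volume :=
        MeasureTheory.measurePreserving_add_left volume x
      have haes : AEStronglyMeasurable (iteratedFDeriv ℝ (i+j) u) volume :=
        (hcont (i+j)).aestronglyMeasurable
      have htrans : eLpNorm ((iteratedFDeriv ℝ (i+j) u) ∘ (fun y => x + y)) p volume
          = eLpNorm (iteratedFDeriv ℝ (i+j) u) p volume :=
        eLpNorm_comp_measurePreserving haes hmp
      have haes2 : AEStronglyMeasurable ((iteratedFDeriv ℝ (i+j) u) ∘ (fun y => x + y))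
          (Measure.pi ν) :=
        ((hcont (i+j)).comp (continuous_const.add continuous_id)).aestronglyMeasurable
      calc ∫⁻ y, G j y ∂(Measure.pi ν)
          = eLpNorm ((iteratedFDeriv ℝ (i+j) u) ∘ (fun y => x + y)) 1 (Measure.pi ν) := by
            rw [eLpNorm_one_eq_lintegral_enorm]; rfl
        _ ≤ eLpNorm ((iteratedFDeriv ℝ (i+j) u) ∘ (fun y => x + y)) p (Measure.pi ν)
              * (Measure.pi ν) Set.univ ^ (1/(1:ℝ≥0∞).toReal - 1/p.toReal) :=
            eLpNorm_le_eLpNorm_mul_rpow_measure_univ hp1 haes2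
        _ = eLpNorm ((iteratedFDeriv ℝ (i+j) u) ∘ (fun y => x + y)) p (Measure.pi ν) := by
            rw [measure_univ, ENNReal.one_rpow, mul_one]
        _ ≤ eLpNorm ((iteratedFDeriv ℝ (i+j) u) ∘ (fun y => x + y)) p volume := by
            rw [hν, cube_eq n]
            exact eLpNorm_mono_measure _ Measure.restrict_le_self
        _ = eLpNorm (iteratedFDeriv ℝ (i+j) u) p volume := htrans
    calc ∫⁻ y, S n y ∂(Measure.pi ν)
        = 2^n * ∫⁻ y, ∑ j ∈ Finset.range (n+1), G j y ∂(Measure.pi ν) := by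
          rw [lintegral_const_mul _ (Finset.measurable_sum _ fun j _ => hGm j)]
      _ = 2^n * ∑ j ∈ Finset.range (n+1), ∫⁻ y, G j y ∂(Measure.pi ν) := by
          rw [lintegral_finset_sum _ fun j _ => hGm j]
      _ ≤ B := by
          rw [hB_def]
          gcongr with j hj
          exact hjbound j
  refine ⟨B.toReal, ENNReal.toReal_nonneg, fun x => ?_⟩
  have hx := hmain x
  calc ‖iteratedFDeriv ℝ i u x‖ = ((‖iteratedFDeriv ℝ i u x‖₊ : ℝ≥0∞)).toReal := by simp
    _ ≤ B.toReal := ENNReal.toReal_mono hB hx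
end mainpi



set_option maxHeartbeats 1000000 in
set_option synthInstance.maxHeartbeats 400000 in
lemma derivs_bounded {n : ℕ} {p : ℝ≥0∞} (hp1 : 1 ≤ p)
    (f : EuclideanSpace ℝ (Fin n) → ℂ) (hf : ContDiff ℝ (⊤ : ℕ∞) f)
    (hfp : ∀ j : ℕ, MemLp (fun x => iteratedFDeriv ℝ j f x) p volume) (i : ℕ) :
    ∃ C : ℝ, 0 ≤ C ∧ ∀ x, ‖iteratedFDeriv ℝ i f x‖ ≤ C := by
  classical
  set e : EuclideanSpace ℝ (Fin n) ≃L[ℝ] (Fin n → ℝ) :=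
    PiLp.continuousLinearEquiv 2 ℝ (fun _ : Fin n => ℝ) with he
  set u : (Fin n → ℝ) → ℂ := f ∘ ⇑e.symm with hu_def
  have hu : ContDiff ℝ (⊤ : ℕ∞) u := hf.comp (e.symm : (Fin n → ℝ) →L[ℝ] EuclideanSpace ℝ (Fin n)).contDiff
  have hmpcoe : ⇑(MeasurableEquiv.toLp 2 (Fin n → ℝ)).symm.symm = ⇑e.symm := rfl
  have hmp : MeasurePreserving (⇑e.symm) volume volume := by
    rw [← hmpcoe]
    exact (EuclideanSpace.volume_preserving_symm_measurableEquiv_toLp (Fin n)).symm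
  have hcontf : ∀ k : ℕ, Continuous (iteratedFDeriv ℝ k f) := fun k =>
    hf.continuous_iteratedFDeriv (by exact_mod_cast le_top)
  have hLpu : ∀ j : ℕ, MemLp (iteratedFDeriv ℝ j u) p volume := by
    intro j
    have hcomp : MemLp ((iteratedFDeriv ℝ j f) ∘ ⇑e.symm) p volume :=
      ⟨((hcontf j).comp e.symm.continuous).aestronglyMeasurable,
        by rw [eLpNorm_comp_measurePreserving (hfp j).1 hmp]; exact (hfp j).2⟩
    refine MemLp.of_le_mul
      (c := ‖(e.symm : (Fin n → ℝ) →L[ℝ] EuclideanSpace ℝ (Fin n))‖^j) hcomp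
      ((hu.continuous_iteratedFDeriv (by exact_mod_cast le_top)).aestronglyMeasurable) ?_
    refine Eventually.of_forall fun y => ?_
    have hu_eq : u = f ∘ ⇑((e.symm : (Fin n → ℝ) →L[ℝ] EuclideanSpace ℝ (Fin n))) := rfl
    rw [hu_eq, ContinuousLinearMap.iteratedFDeriv_comp_right _ hf y
      (i := j) (by exact_mod_cast le_top)]
    calc ‖(iteratedFDeriv ℝ j f (e.symm y)).compContinuousLinearMap
          (fun _ => (e.symm : (Fin n → ℝ) →L[ℝ] EuclideanSpace ℝ (Fin n)))‖
        ≤ ‖iteratedFDeriv ℝ j f (e.symm y)‖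
            * ∏ _k : Fin j, ‖(e.symm : (Fin n → ℝ) →L[ℝ] EuclideanSpace ℝ (Fin n))‖ :=
          ContinuousMultilinearMap.norm_compContinuousLinearMap_le _ _
      _ = ‖(e.symm : (Fin n → ℝ) →L[ℝ] EuclideanSpace ℝ (Fin n))‖^j
            * ‖((iteratedFDeriv ℝ j f) ∘ ⇑e.symm) y‖ := by
          simp [Finset.prod_const, mul_comm]
  obtain ⟨C, hC0, hC⟩ := main_pi hp1 u hu hLpu i
  refine ⟨C * ‖(e : EuclideanSpace ℝ (Fin n) →L[ℝ] (Fin n → ℝ))‖^i,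
    by positivity, fun x => ?_⟩
  have hfu : f = u ∘ ⇑(e : EuclideanSpace ℝ (Fin n) →L[ℝ] (Fin n → ℝ)) := by
    funext y
    simp [hu_def]
  have hder := ContinuousLinearMap.iteratedFDeriv_comp_right
    (e : EuclideanSpace ℝ (Fin n) →L[ℝ] (Fin n → ℝ)) hu x
    (i := i) (by exact_mod_cast le_top)
  rw [hfu, hder]
  calc ‖(iteratedFDeriv ℝ i u (e x)).compContinuousLinearMap
        (fun _ => (e : EuclideanSpace ℝ (Fin n) →L[ℝ] (Fin n → ℝ)))‖
      ≤ ‖iteratedFDeriv ℝ i u (e x)‖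
          * ∏ _k : Fin i, ‖(e : EuclideanSpace ℝ (Fin n) →L[ℝ] (Fin n → ℝ))‖ :=
        ContinuousMultilinearMap.norm_compContinuousLinearMap_le _ _
    _ ≤ C * ‖(e : EuclideanSpace ℝ (Fin n) →L[ℝ] (Fin n → ℝ))‖^i := by
        rw [Finset.prod_const, Finset.card_univ, Fintype.card_fin]
        exact mul_le_mul_of_nonneg_right (hC _) (by positivity)

set_option maxHeartbeats 1000000 in
set_option synthInstance.maxHeartbeats 400000 in
/-- If `f, g : ℝⁿ → ℂ` are smooth and all of their iterated derivatives belong to `L^p`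
(`1 ≤ p < ∞`), then all iterated derivatives of the pointwise product `f·g` belong to `L^p`;
i.e. the multiplication `𝒟_{L^p} × 𝒟_{L^p} → 𝒟_{L^p}` is well-defined. -/
theorem mul_memLp_of_derivs_memLp (n : ℕ) (p : ℝ≥0∞) (hp1 : 1 ≤ p) (hp2 : p ≠ ⊤)
    (f g : EuclideanSpace ℝ (Fin n) → ℂ)
    (hf : ContDiff ℝ (⊤ : ℕ∞) f) (hg : ContDiff ℝ (⊤ : ℕ∞) g)
    (hfp : ∀ j : ℕ, MemLp (fun x => iteratedFDeriv ℝ j f x) p volume)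
    (hgp : ∀ j : ℕ, MemLp (fun x => iteratedFDeriv ℝ j g x) p volume) :
    ∀ j : ℕ, MemLp (fun x => iteratedFDeriv ℝ j (fun y => f y * g y) x) p volume := by
  intro j
  choose Cf hCf0 hCf using fun i => derivs_bounded hp1 f hf hfp i
  set h : EuclideanSpace ℝ (Fin n) → ℝ := fun x =>
    ∑ i ∈ Finset.range (j+1), (j.choose i : ℝ) * Cf i * ‖iteratedFDeriv ℝ (j-i) g x‖ with hh
  have hhLp : MemLp h p volume := by
    apply memLp_finset_sum
    intro i _
    exact ((hgp (j-i)).norm.const_mul _)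
  refine MemLp.of_le hhLp
    (((hf.mul hg).continuous_iteratedFDeriv (by exact_mod_cast le_top)).aestronglyMeasurable) ?_
  refine Eventually.of_forall fun x => ?_
  have hbound := norm_iteratedFDeriv_mul_le hf hg x (n := j) (by exact_mod_cast le_top)
  have h1 : ∑ i ∈ Finset.range (j+1),
      (j.choose i : ℝ) * ‖iteratedFDeriv ℝ i f x‖ * ‖iteratedFDeriv ℝ (j-i) g x‖ ≤ h x := by
    rw [hh]
    apply Finset.sum_le_sum
    intro i _
    have hn := norm_nonneg (iteratedFDeriv ℝ (j-i) g x)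
    have hc : (0:ℝ) ≤ (j.choose i : ℝ) := by positivity
    exact mul_le_mul_of_nonneg_right
      (mul_le_mul_of_nonneg_left (hCf i x) hc) hn
  have h2 : h x ≤ ‖h x‖ := le_abs_self _
  calc ‖iteratedFDeriv ℝ j (fun y => f y * g y) x‖ ≤ _ := hbound
    _ ≤ h x := h1
    _ ≤ ‖h x‖ := h2
end

section
/- Derivatives of order m+1 of smooth functions with all derivatives bounded cannot be estimated by derivatives of order at most m: for every n ≥ 1, every m ∈ ℕ, and every C > 0, there exist a smooth function f : ℝⁿ → ℂ all of whose iterated derivatives are bounded on ℝⁿ and a real M > 0 such that ‖iteratedFDeriv ℝ j f x‖ ≤ M for all j ≤ m and all x ∈ ℝⁿ, while ‖iteratedFDeriv ℝ (m+1) f 0‖ > C·M. -/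
open Complex

/-- derivative of `t ↦ exp (c*t)` on the reals. -/
lemma hasDerivAt_cexp_real (c : ℂ) (t : ℝ) :
    HasDerivAt (fun s : ℝ => Complex.exp (c * s)) (c * Complex.exp (c * t)) t := by
  have h : HasDerivAt (fun z : ℂ => Complex.exp (c * z)) (c * Complex.exp (c * t)) (t : ℂ) := by
    have h1 : HasDerivAt (fun z : ℂ => c * z) c (t : ℂ) := by
      simpa using (hasDerivAt_id (t : ℂ)).const_mul c
    exact ((Complex.hasDerivAt_exp (c * t)).comp (t : ℂ) h1).congr_deriv (mul_comm _ _)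
  exact h.comp_ofReal

lemma smooth_cexp_real (c : ℂ) : ContDiff ℝ (⊤ : ℕ∞) (fun s : ℝ => Complex.exp (c * s)) := by
  exact ((Complex.contDiff_exp (𝕜 := ℂ)).restrict_scalars ℝ).comp
    (contDiff_const.mul Complex.ofRealCLM.contDiff)

lemma iteratedDeriv_cexp_real (c : ℂ) (k : ℕ) :
    iteratedDeriv k (fun s : ℝ => Complex.exp (c * s))
      = fun s : ℝ => c ^ k * Complex.exp (c * s) := by
  induction k with
  | zero => simp
  | succ k ih =>
    funext t
    rw [iteratedDeriv_succ, ih]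
    have : HasDerivAt (fun s : ℝ => c ^ k * Complex.exp (c * s))
        (c ^ k * (c * Complex.exp (c * t))) t := (hasDerivAt_cexp_real c t).const_mul _
    rw [this.deriv]; ring

/-- Derivatives of order `m+1` of smooth functions with all derivatives bounded cannot be
estimated by derivatives of order at most `m`: for every `n ≥ 1`, `m ∈ ℕ` and `C > 0`
there are a smooth `f : ℝⁿ → ℂ` all of whose iterated derivatives are bounded and `M > 0`
with `‖iteratedFDeriv ℝ j f x‖ ≤ M` for all `j ≤ m` and all `x`, while
`‖iteratedFDeriv ℝ (m+1) f 0‖ > C·M`. -/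
theorem no_estimate_of_higher_derivatives_bounded_functions (n : ℕ) (hn : 1 ≤ n) (m : ℕ)
    (C : ℝ) (hC : 0 < C) :
    ∃ (f : EuclideanSpace ℝ (Fin n) → ℂ) (M : ℝ), 0 < M ∧ ContDiff ℝ (⊤ : ℕ∞) f ∧
      (∀ j : ℕ, ∃ Cj : ℝ, ∀ x : EuclideanSpace ℝ (Fin n), ‖iteratedFDeriv ℝ j f x‖ ≤ Cj) ∧
      (∀ j ≤ m, ∀ x : EuclideanSpace ℝ (Fin n), ‖iteratedFDeriv ℝ j f x‖ ≤ M) ∧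
      C * M < ‖iteratedFDeriv ℝ (m + 1) f 0‖ := by
  set lam : ℝ := C + 1 with hlam
  have hlam1 : 1 ≤ lam := by linarith
  have hlam0 : 0 < lam := by linarith
  set c : ℂ := lam * Complex.I with hc
  have hcnorm : ‖c‖ = lam := by
    simp [hc, abs_of_pos hlam0]
  set g : ℝ → ℂ := fun s => Complex.exp (c * s) with hg
  -- norm of g's derivatives
  have hgnorm : ∀ k (t : ℝ), ‖iteratedFDeriv ℝ k g t‖ = lam ^ k := by
    intro k t
    rw [norm_iteratedFDeriv_eq_norm_iteratedDeriv, iteratedDeriv_cexp_real]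
    have : (c * t).re = 0 := by simp [hc]
    rw [norm_mul, norm_pow, hcnorm, Complex.norm_exp, this,
      Real.exp_zero, mul_one]
  have hgsmooth : ContDiff ℝ (⊤ : ℕ∞) g := smooth_cexp_real c
  set i₀ : Fin n := ⟨0, hn⟩ with hi₀
  set L : EuclideanSpace ℝ (Fin n) →L[ℝ] ℝ := EuclideanSpace.proj i₀ with hL
  have hLle : ‖L‖ ≤ 1 := by
    apply ContinuousLinearMap.opNorm_le_bound _ zero_le_one
    intro x
    rw [one_mul]
    have : ‖L x‖ = Real.sqrt ((x i₀) ^ 2) := by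
      simp [hL, Real.sqrt_sq_eq_abs]
    rw [this, EuclideanSpace.norm_eq]
    apply Real.sqrt_le_sqrt
    simp only [Real.norm_eq_abs]
    have := Finset.single_le_sum (f := fun i => |x i| ^ 2) (fun i _ => by positivity)
      (Finset.mem_univ i₀)
    simpa [sq_abs] using this
  set f : EuclideanSpace ℝ (Fin n) → ℂ := g ∘ L with hf
  have hfsmooth : ContDiff ℝ (⊤ : ℕ∞) f := hgsmooth.comp L.contDiff
  have hfd : ∀ k (x : EuclideanSpace ℝ (Fin n)),
      iteratedFDeriv ℝ k f x
        = (iteratedFDeriv ℝ k g (L x)).compContinuousLinearMap fun _ => L := by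
    intro k x
    exact L.iteratedFDeriv_comp_right hgsmooth x ((by exact_mod_cast le_top))
  have hub : ∀ k (x : EuclideanSpace ℝ (Fin n)), ‖iteratedFDeriv ℝ k f x‖ ≤ lam ^ k := by
    intro k x
    rw [hfd]
    calc ‖(iteratedFDeriv ℝ k g (L x)).compContinuousLinearMap fun _ => L‖
        ≤ ‖iteratedFDeriv ℝ k g (L x)‖ * ∏ _i : Fin k, ‖L‖ :=
          ContinuousMultilinearMap.norm_compContinuousLinearMap_le _ _
      _ ≤ lam ^ k * 1 := by
          rw [hgnorm]
          apply mul_le_mul_of_nonneg_left _ (by positivity)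
          calc ∏ _i : Fin k, ‖L‖ ≤ ∏ _i : Fin k, (1 : ℝ) :=
                Finset.prod_le_prod (fun _ _ => norm_nonneg _) (fun _ _ => hLle)
            _ = 1 := by simp
      _ = lam ^ k := mul_one _
  refine ⟨f, lam ^ m, by positivity, hfsmooth, fun j => ⟨lam ^ j, hub j⟩, ?_, ?_⟩
  · intro j hj x
    exact (hub j x).trans (pow_le_pow_right₀ hlam1 hj)
  · -- lower bound on the (m+1)-st derivative at 0
    have key : lam ^ (m + 1) ≤ ‖iteratedFDeriv ℝ (m + 1) f 0‖ := by
      set v : Fin (m + 1) → EuclideanSpace ℝ (Fin n) :=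
        fun _ => EuclideanSpace.single i₀ (1 : ℝ) with hv
      have hval : iteratedFDeriv ℝ (m + 1) f 0 v = c ^ (m + 1) * Complex.exp (c * (L 0)) := by
        rw [hfd]
        have h1 : (fun i => L (v i)) = fun _ : Fin (m + 1) => (1 : ℝ) := by
          funext i
          simp [hv, hL]
        rw [ContinuousMultilinearMap.compContinuousLinearMap_apply, h1,
          ← iteratedDeriv_eq_iteratedFDeriv, iteratedDeriv_cexp_real]
      have hnv : ‖iteratedFDeriv ℝ (m + 1) f 0 v‖ = lam ^ (m + 1) := by
        rw [hval]
        have : (c * (L 0 : ℝ)).re = 0 := by simp [hc]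
        rw [norm_mul, norm_pow, hcnorm, Complex.norm_exp, this,
          Real.exp_zero, mul_one]
      have := (iteratedFDeriv ℝ (m + 1) f 0).le_opNorm v
      rw [hnv] at this
      calc lam ^ (m + 1) ≤ ‖iteratedFDeriv ℝ (m + 1) f 0‖ * ∏ i, ‖v i‖ := this
        _ = ‖iteratedFDeriv ℝ (m + 1) f 0‖ := by
            simp [hv, EuclideanSpace.norm_single]
    calc C * lam ^ m < lam * lam ^ m := by
          apply mul_lt_mul_of_pos_right _ (by positivity)
          linarith
      _ = lam ^ (m + 1) := by ring
      _ ≤ _ := key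
end

section
/- Let φ : ℝⁿ → ℂ be smooth with compact support and equal to 1 on a neighbourhood of 0. For every order j ∈ ℕ and every ε > 0 there exists N ∈ ℕ such that for all natural numbers r, s ≥ N one has, for every x ∈ ℝⁿ, ‖iteratedFDeriv ℝ j (y ↦ (φ(y/r) − φ(y/s))·(1+‖y‖²)⁻¹) x‖ ≤ ε; i.e. the functions x ↦ φ(x/r)·(1+‖x‖²)⁻¹ form a Cauchy sequence uniformly together with each fixed order of derivatives. -/
open Filter Metric
set_option synthInstance.maxHeartbeats 1000000
set_option maxHeartbeats 1000000

variable {E : Type*} [NormedAddCommGroup E] [InnerProductSpace ℝ E]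

lemma one_add_sq_pos (y : E) : (0:ℝ) < 1 + ‖y‖ ^ 2 := by positivity

lemma g_smooth : ContDiff ℝ (⊤ : ℕ∞) (fun y : E => (1 + ‖y‖ ^ 2)⁻¹) :=
  (contDiff_const.add (contDiff_norm_sq ℝ)).inv fun y => (one_add_sq_pos y).ne'

lemma hasFDerivAt_g (y : E) :
    HasFDerivAt (fun y : E => (1 + ‖y‖ ^ 2)⁻¹)
      (((-2 : ℝ) * ((1 + ‖y‖ ^ 2)⁻¹ * (1 + ‖y‖ ^ 2)⁻¹)) • innerSL ℝ y) y := by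
  have h1 : HasFDerivAt (fun y : E => 1 + ‖y‖ ^ 2) (2 • innerSL ℝ y) y := by
    simpa using (hasStrictFDerivAt_norm_sq y).hasFDerivAt.const_add (1:ℝ)
  have h2 : HasDerivAt (fun t : ℝ => t⁻¹) (-(((1 + ‖y‖ ^ 2) : ℝ) ^ 2)⁻¹) (1 + ‖y‖ ^ 2) :=
    hasDerivAt_inv (one_add_sq_pos y).ne'
  have h3 := h2.comp_hasFDerivAt y h1
  have heq : (-(((1 + ‖y‖ ^ 2) : ℝ) ^ 2)⁻¹) • (2 • innerSL ℝ y)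
      = ((-2 : ℝ) * ((1 + ‖y‖ ^ 2)⁻¹ * (1 + ‖y‖ ^ 2)⁻¹)) • innerSL ℝ y := by
    have hinv : (((1 + ‖y‖ ^ 2 : ℝ)) ^ 2)⁻¹ = (1 + ‖y‖ ^ 2)⁻¹ * (1 + ‖y‖ ^ 2)⁻¹ := by
      rw [sq, mul_inv]
    ext v
    simp [hinv]
    ring
  exact heq ▸ h3

lemma fderiv_g :
    fderiv ℝ (fun y : E => (1 + ‖y‖ ^ 2)⁻¹)
      = fun y => ((-2 : ℝ) • ((1 + ‖y‖ ^ 2)⁻¹ * (1 + ‖y‖ ^ 2)⁻¹)) • innerSL ℝ y :=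
  funext fun y => by
    rw [(hasFDerivAt_g y).fderiv]; norm_num

lemma A_one (y : E) : ‖iteratedFDeriv ℝ 1 (fun z : E => innerSL ℝ z) y‖ ≤ 1 := by
  have h : ‖iteratedFDeriv ℝ 0 (fderiv ℝ (fun z : E => innerSL ℝ z)) y‖
      = ‖iteratedFDeriv ℝ 1 (fun z : E => innerSL ℝ z) y‖ := norm_iteratedFDeriv_fderiv
  rw [← h, norm_iteratedFDeriv_zero, (innerSL ℝ).fderiv]
  exact norm_innerSL_le ℝ

lemma A_ge_two (d : ℕ) (hd : 2 ≤ d) (y : E) :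
    ‖iteratedFDeriv ℝ d (fun z : E => innerSL ℝ z) y‖ = 0 := by
  obtain ⟨d', rfl⟩ : ∃ d', d = d' + 2 := ⟨d - 2, by omega⟩
  have h : ‖iteratedFDeriv ℝ (d' + 1) (fderiv ℝ (fun z : E => innerSL ℝ z)) y‖
      = ‖iteratedFDeriv ℝ (d' + 2) (fun z : E => innerSL ℝ z) y‖ := norm_iteratedFDeriv_fderiv
  rw [← h]
  have h2 : fderiv ℝ (fun z : E => innerSL ℝ z) = fun _ => innerSL ℝ :=
    funext fun z => (innerSL ℝ).fderiv
  rw [h2, iteratedFDeriv_const_of_ne (Nat.succ_ne_zero d')]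
  simp

lemma g_decay (m : ℕ) : ∃ C : ℝ, 0 ≤ C ∧ ∀ l ≤ m, ∀ y : E,
    ‖iteratedFDeriv ℝ l (fun y : E => (1 + ‖y‖ ^ 2)⁻¹) y‖ * (1 + ‖y‖) ^ (l + 2) ≤ C := by
  induction m with
  | zero =>
    refine ⟨2, by norm_num, ?_⟩
    intro l hl y
    obtain rfl : l = 0 := Nat.le_zero.mp hl
    rw [norm_iteratedFDeriv_zero]
    have hy := norm_nonneg y
    have hp := one_add_sq_pos y
    rw [Real.norm_eq_abs, abs_of_pos (inv_pos.2 hp)]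
    have h2 : (1 + ‖y‖) ^ (0 + 2) ≤ 2 * (1 + ‖y‖ ^ 2) := by
      have he : (1 + ‖y‖) ^ (0 + 2) = (1 + ‖y‖) ^ 2 := by norm_num
      rw [he]; nlinarith [sq_nonneg (1 - ‖y‖)]
    calc (1 + ‖y‖ ^ 2)⁻¹ * (1 + ‖y‖) ^ (0 + 2)
        ≤ (1 + ‖y‖ ^ 2)⁻¹ * (2 * (1 + ‖y‖ ^ 2)) := by gcongr
      _ = 2 := by field_simp
  | succ m ih =>
    obtain ⟨C, hC0, hC⟩ := ih
    have hg : ContDiff ℝ (⊤ : ℕ∞) (fun y : E => (1 + ‖y‖ ^ 2)⁻¹) := g_smooth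
    have hgg : ContDiff ℝ (⊤ : ℕ∞) (fun y : E => (1 + ‖y‖ ^ 2)⁻¹ * (1 + ‖y‖ ^ 2)⁻¹) := hg.mul hg
    set w : E → ℝ := fun y => (-2 : ℝ) • ((1 + ‖y‖ ^ 2)⁻¹ * (1 + ‖y‖ ^ 2)⁻¹) with hwdef
    have hwsm : ContDiff ℝ (⊤ : ℕ∞) w := hgg.const_smul (-2 : ℝ)
    set W : ℝ := 2 * (2 ^ m * (C * C)) with hWdef
    have hW0 : 0 ≤ W := by positivity
    have hwbound : ∀ i ≤ m, ∀ y : E, ‖iteratedFDeriv ℝ i w y‖ * (1 + ‖y‖) ^ (i + 4) ≤ W := by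
      intro i hi y
      have hpy : (0:ℝ) < 1 + ‖y‖ := by positivity
      have hsm : ‖iteratedFDeriv ℝ i w y‖
          = 2 * ‖iteratedFDeriv ℝ i (fun y : E => (1 + ‖y‖ ^ 2)⁻¹ * (1 + ‖y‖ ^ 2)⁻¹) y‖ := by
        rw [hwdef, iteratedFDeriv_const_smul_apply' (hgg.contDiffAt.of_le (by exact_mod_cast le_top))]
        rw [norm_smul (β := ContinuousMultilinearMap ℝ (fun _ : Fin i => E) ℝ)]
        norm_num
      have hmul := norm_iteratedFDeriv_mul_le (𝕜 := ℝ) hg hg y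
        (by exact_mod_cast le_top : ((i : ℕ) : WithTop ℕ∞) ≤ ((⊤ : ℕ∞) : WithTop ℕ∞))
      rw [hsm, hWdef]
      rw [mul_assoc]
      have hmain : ‖iteratedFDeriv ℝ i (fun y : E => (1 + ‖y‖ ^ 2)⁻¹ * (1 + ‖y‖ ^ 2)⁻¹) y‖
          * (1 + ‖y‖) ^ (i + 4) ≤ 2 ^ m * (C * C) := by
        calc ‖iteratedFDeriv ℝ i (fun y : E => (1 + ‖y‖ ^ 2)⁻¹ * (1 + ‖y‖ ^ 2)⁻¹) y‖
            * (1 + ‖y‖) ^ (i + 4)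
            ≤ (∑ l ∈ Finset.range (i + 1), (i.choose l : ℝ)
                * ‖iteratedFDeriv ℝ l (fun y : E => (1 + ‖y‖ ^ 2)⁻¹) y‖
                * ‖iteratedFDeriv ℝ (i - l) (fun y : E => (1 + ‖y‖ ^ 2)⁻¹) y‖)
              * (1 + ‖y‖) ^ (i + 4) := by
              exact mul_le_mul_of_nonneg_right hmul (by positivity)
          _ = ∑ l ∈ Finset.range (i + 1), (i.choose l : ℝ)
                * ‖iteratedFDeriv ℝ l (fun y : E => (1 + ‖y‖ ^ 2)⁻¹) y‖
                * ‖iteratedFDeriv ℝ (i - l) (fun y : E => (1 + ‖y‖ ^ 2)⁻¹) y‖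
                * (1 + ‖y‖) ^ (i + 4) := Finset.sum_mul ..
          _ ≤ ∑ l ∈ Finset.range (i + 1), (i.choose l : ℝ) * (C * C) := by
              refine Finset.sum_le_sum fun l hl => ?_
              have hli : l ≤ i := Nat.lt_succ_iff.mp (Finset.mem_range.mp hl)
              have hsplit : (1 + ‖y‖) ^ (i + 4)
                  = (1 + ‖y‖) ^ (l + 2) * (1 + ‖y‖) ^ ((i - l) + 2) := by
                rw [← pow_add]; congr 1; omega
              rw [hsplit]
              have h1 := hC l (hli.trans hi) y
              have h2 := hC (i - l) ((Nat.sub_le i l).trans hi) y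
              calc (i.choose l : ℝ)
                  * ‖iteratedFDeriv ℝ l (fun y : E => (1 + ‖y‖ ^ 2)⁻¹) y‖
                  * ‖iteratedFDeriv ℝ (i - l) (fun y : E => (1 + ‖y‖ ^ 2)⁻¹) y‖
                  * ((1 + ‖y‖) ^ (l + 2) * (1 + ‖y‖) ^ ((i - l) + 2))
                  = (i.choose l : ℝ)
                    * ((‖iteratedFDeriv ℝ l (fun y : E => (1 + ‖y‖ ^ 2)⁻¹) y‖
                        * (1 + ‖y‖) ^ (l + 2))
                      * (‖iteratedFDeriv ℝ (i - l) (fun y : E => (1 + ‖y‖ ^ 2)⁻¹) y‖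
                        * (1 + ‖y‖) ^ ((i - l) + 2))) := by ring
                _ ≤ (i.choose l : ℝ) * (C * C) := by
                    refine mul_le_mul_of_nonneg_left ?_ (by positivity)
                    exact mul_le_mul h1 h2 (by positivity) hC0
          _ = (2 : ℝ) ^ i * (C * C) := by
              rw [← Finset.sum_mul]
              congr 1
              rw [← Nat.cast_sum, Nat.sum_range_choose]
              push_cast; ring
          _ ≤ 2 ^ m * (C * C) := by
              have : (2:ℝ) ^ i ≤ 2 ^ m := pow_le_pow_right₀ one_le_two hi
              nlinarith [mul_nonneg hC0 hC0]
      nlinarith [norm_nonneg (iteratedFDeriv ℝ i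
        (fun y : E => (1 + ‖y‖ ^ 2)⁻¹ * (1 + ‖y‖ ^ 2)⁻¹) y), pow_pos hpy (i+4)]
    -- step bound at order m+1
    have hstep : ∀ y : E, ‖iteratedFDeriv ℝ (m + 1) (fun y : E => (1 + ‖y‖ ^ 2)⁻¹) y‖
        * (1 + ‖y‖) ^ (m + 1 + 2) ≤ 2 ^ m * W := by
      intro y
      have hpy : (0:ℝ) < 1 + ‖y‖ := by positivity
      have hfd : ‖iteratedFDeriv ℝ (m + 1) (fun y : E => (1 + ‖y‖ ^ 2)⁻¹) y‖
          = ‖iteratedFDeriv ℝ m (fderiv ℝ (fun y : E => (1 + ‖y‖ ^ 2)⁻¹)) y‖ :=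
        norm_iteratedFDeriv_fderiv.symm
      have hfg : fderiv ℝ (fun y : E => (1 + ‖y‖ ^ 2)⁻¹)
          = fun y => w y • innerSL ℝ y := fderiv_g
      rw [hfd, hfg]
      have key := norm_iteratedFDeriv_smul_le (𝕜 := ℝ) hwsm ((innerSL ℝ).contDiff) y
        (by exact_mod_cast le_top : ((m : ℕ) : WithTop ℕ∞) ≤ ((⊤ : ℕ∞) : WithTop ℕ∞))
      calc ‖iteratedFDeriv ℝ m (fun y : E => w y • innerSL ℝ y) y‖ * (1 + ‖y‖) ^ (m + 1 + 2)
          ≤ (∑ i ∈ Finset.range (m + 1), (m.choose i : ℝ) * ‖iteratedFDeriv ℝ i w y‖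
              * ‖iteratedFDeriv ℝ (m - i) (fun z : E => innerSL ℝ z) y‖)
            * (1 + ‖y‖) ^ (m + 1 + 2) := mul_le_mul_of_nonneg_right key (by positivity)
        _ = ∑ i ∈ Finset.range (m + 1), (m.choose i : ℝ) * ‖iteratedFDeriv ℝ i w y‖
              * ‖iteratedFDeriv ℝ (m - i) (fun z : E => innerSL ℝ z) y‖
              * (1 + ‖y‖) ^ (m + 1 + 2) := Finset.sum_mul ..
        _ ≤ ∑ i ∈ Finset.range (m + 1), (m.choose i : ℝ) * W := by
            refine Finset.sum_le_sum fun i hil => ?_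
            have him : i ≤ m := Nat.lt_succ_iff.mp (Finset.mem_range.mp hil)
            by_cases h0 : m - i = 0
            · rw [h0, norm_iteratedFDeriv_zero, innerSL_apply_norm]
              have hyp : ‖y‖ ≤ 1 + ‖y‖ := by linarith [norm_nonneg y]
              calc (m.choose i : ℝ) * ‖iteratedFDeriv ℝ i w y‖ * ‖y‖ * (1 + ‖y‖) ^ (m + 1 + 2)
                  ≤ (m.choose i : ℝ) * ‖iteratedFDeriv ℝ i w y‖ * (1 + ‖y‖)
                      * (1 + ‖y‖) ^ (m + 1 + 2) := by gcongr
                _ = (m.choose i : ℝ) * (‖iteratedFDeriv ℝ i w y‖ * (1 + ‖y‖) ^ (i + 4)) := by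
                    rw [show i + 4 = (m + 1 + 2) + 1 by omega, pow_succ]; ring
                _ ≤ (m.choose i : ℝ) * W :=
                    mul_le_mul_of_nonneg_left (hwbound i him y) (by positivity)
            by_cases h1 : m - i = 1
            · rw [h1]
              have hA1 := A_one (E := E) y
              calc (m.choose i : ℝ) * ‖iteratedFDeriv ℝ i w y‖
                    * ‖iteratedFDeriv ℝ 1 (fun z : E => innerSL ℝ z) y‖
                    * (1 + ‖y‖) ^ (m + 1 + 2)
                  ≤ (m.choose i : ℝ) * ‖iteratedFDeriv ℝ i w y‖ * 1
                      * (1 + ‖y‖) ^ (m + 1 + 2) := by gcongr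
                _ = (m.choose i : ℝ) * (‖iteratedFDeriv ℝ i w y‖ * (1 + ‖y‖) ^ (i + 4)) := by
                    rw [show m + 1 + 2 = i + 4 by omega]; ring
                _ ≤ (m.choose i : ℝ) * W :=
                    mul_le_mul_of_nonneg_left (hwbound i him y) (by positivity)
            · have hd : 2 ≤ m - i := by omega
              rw [A_ge_two (m - i) hd y]
              have : (0:ℝ) ≤ (m.choose i : ℝ) * W := by positivity
              simpa using this
        _ = (2:ℝ) ^ m * W := by
            rw [← Finset.sum_mul]
            congr 1
            rw [← Nat.cast_sum, Nat.sum_range_choose]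
            push_cast; ring
    refine ⟨max C (2 ^ m * W), le_trans hC0 (le_max_left _ _), ?_⟩
    intro l hl y
    by_cases hlm : l ≤ m
    · exact (hC l hlm y).trans (le_max_left _ _)
    · obtain rfl : l = m + 1 := by omega
      exact (hstep y).trans (le_max_right _ _)

lemma iteratedFDeriv_eq_zero_of_eventuallyEq_zero {E' F : Type*} [NormedAddCommGroup E']
    [NormedSpace ℝ E'] [NormedAddCommGroup F] [NormedSpace ℝ F] {f : E' → F} {x : E'}
    (h : f =ᶠ[nhds x] fun _ => 0) (n : ℕ) : iteratedFDeriv ℝ n f x = 0 := by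
  rw [← iteratedFDerivWithin_univ]
  have h' : f =ᶠ[nhdsWithin x Set.univ] fun _ => (0:F) := by rwa [nhdsWithin_univ]
  rw [h'.iteratedFDerivWithin_eq h.self_of_nhds n, iteratedFDerivWithin_univ]
  simp [iteratedFDeriv_zero_fun]

/-- Let `φ : ℝⁿ → ℂ` be smooth with compact support, equal to `1` on a neighbourhood of `0`.
For every order `j` and every `ε > 0` there is `N` such that for all `r, s ≥ N` the function
`y ↦ (φ(y/r) − φ(y/s))·(1+‖y‖²)⁻¹` has `j`-th iterated derivative of norm at most `ε`
everywhere; i.e. the functions `x ↦ φ(x/r)·(1+‖x‖²)⁻¹` form a Cauchy sequence uniformly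
together with each fixed order of derivatives. -/
theorem cutoff_cauchy_sequence (n : ℕ) (φ : EuclideanSpace ℝ (Fin n) → ℂ)
    (hφ : ContDiff ℝ (⊤ : ℕ∞) φ) (hφc : HasCompactSupport φ)
    (hφ1 : ∀ᶠ y in nhds (0 : EuclideanSpace ℝ (Fin n)), φ y = 1) :
    ∀ (j : ℕ) (ε : ℝ), 0 < ε → ∃ N : ℕ, ∀ r s : ℕ, N ≤ r → N ≤ s →
      ∀ x : EuclideanSpace ℝ (Fin n),
        ‖iteratedFDeriv ℝ j
          (fun y : EuclideanSpace ℝ (Fin n) =>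
            (φ ((r : ℝ)⁻¹ • y) - φ ((s : ℝ)⁻¹ • y)) * ((1 + ‖y‖ ^ 2 : ℝ) : ℂ)⁻¹) x‖ ≤ ε := by
  intro j ε hε
  obtain ⟨ρ, hρ, hball⟩ := Metric.eventually_nhds_iff_ball.mp hφ1
  have hMb : ∀ k : ℕ, ∃ Mk : ℝ, 0 ≤ Mk ∧ ∀ z, ‖iteratedFDeriv ℝ k φ z‖ ≤ Mk := by
    intro k
    obtain ⟨Mk, hMk⟩ := (hφ.continuous_iteratedFDeriv (by exact_mod_cast le_top)).bounded_above_of_compact_support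
      (hφc.iteratedFDeriv k)
    exact ⟨max Mk 0, le_max_right _ _, fun z => (hMk z).trans (le_max_left _ _)⟩
  choose M hM0 hM using hMb
  set Mb : ℝ := ∑ k ∈ Finset.range (j + 1), M k with hMbdef
  have hMb0 : 0 ≤ Mb := Finset.sum_nonneg fun k _ => hM0 k
  have hMle : ∀ k, k ≤ j → M k ≤ Mb := fun k hk =>
    Finset.single_le_sum (fun k _ => hM0 k) (Finset.mem_range.mpr (by omega))
  obtain ⟨C, hC0, hC⟩ := g_decay (E := EuclideanSpace ℝ (Fin n)) j
  set B : ℝ := 2 ^ j * (C * (2 * Mb)) with hBdef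
  have hB0 : 0 ≤ B := by positivity
  set N : ℕ := ⌈B / (ε * ρ)⌉₊ + 1 with hNdef
  have hN1 : 1 ≤ N := by omega
  have hN0 : (0:ℝ) < N := by exact_mod_cast hN1
  have hNρpos : (0:ℝ) < (N:ℝ) * ρ := by positivity
  have hNB : B ≤ ε * ((N:ℝ) * ρ) := by
    have h1 : B / (ε * ρ) ≤ (N : ℝ) := by
      refine (Nat.le_ceil _).trans ?_
      rw [hNdef]; push_cast; linarith
    have h2 : (0:ℝ) < ε * ρ := by positivity
    calc B = B / (ε * ρ) * (ε * ρ) := by field_simp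
      _ ≤ (N:ℝ) * (ε * ρ) := mul_le_mul_of_nonneg_right h1 h2.le
      _ = ε * ((N:ℝ) * ρ) := by ring
  refine ⟨N, ?_⟩
  intro r s hr hs x
  have hfun : (fun y : EuclideanSpace ℝ (Fin n) =>
        (φ ((r : ℝ)⁻¹ • y) - φ ((s : ℝ)⁻¹ • y)) * ((1 + ‖y‖ ^ 2 : ℝ) : ℂ)⁻¹)
      = fun y : EuclideanSpace ℝ (Fin n) =>
        ((1 + ‖y‖ ^ 2 : ℝ)⁻¹ : ℝ) • (φ ((r : ℝ)⁻¹ • y) - φ ((s : ℝ)⁻¹ • y)) := by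
    funext y
    rw [Complex.real_smul, Complex.ofReal_inv, mul_comm]
  rw [hfun]
  by_cases hx : ‖x‖ < (N:ℝ) * ρ
  · -- the function vanishes near x
    have hev : (fun y : EuclideanSpace ℝ (Fin n) =>
          ((1 + ‖y‖ ^ 2 : ℝ)⁻¹ : ℝ) • (φ ((r : ℝ)⁻¹ • y) - φ ((s : ℝ)⁻¹ • y)))
        =ᶠ[nhds x] fun _ => (0:ℂ) := by
      have hmem : Metric.ball (0 : EuclideanSpace ℝ (Fin n)) ((N:ℝ) * ρ) ∈ nhds x :=
        Metric.isOpen_ball.mem_nhds (by rwa [mem_ball_zero_iff])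
      filter_upwards [hmem] with y hy
      rw [mem_ball_zero_iff] at hy
      have hsc : ∀ t : ℕ, N ≤ t → φ ((t : ℝ)⁻¹ • y) = 1 := by
        intro t ht
        apply hball
        rw [mem_ball_zero_iff, norm_smul, norm_inv, Real.norm_natCast]
        have ht0 : (0:ℝ) < t := by
          have : 1 ≤ t := le_trans hN1 ht
          exact_mod_cast Nat.cast_pos.mpr (by omega)
        have hNt : (N:ℝ) ≤ (t:ℝ) := Nat.cast_le.mpr ht
        calc (t:ℝ)⁻¹ * ‖y‖ < (t:ℝ)⁻¹ * ((N:ℝ) * ρ) := by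
              have hip : (0:ℝ) < (t:ℝ)⁻¹ := inv_pos.mpr ht0
              nlinarith
          _ ≤ (t:ℝ)⁻¹ * ((t:ℝ) * ρ) := by
              refine mul_le_mul_of_nonneg_left ?_ (inv_pos.mpr ht0).le
              exact mul_le_mul_of_nonneg_right hNt hρ.le
          _ = ρ := by field_simp
      rw [hsc r hr, hsc s hs, sub_self, smul_zero]
    rw [iteratedFDeriv_eq_zero_of_eventuallyEq_zero hev j]
    simpa using hε.le
  · push_neg at hx
    have hct : ∀ t : ℕ, ContDiff ℝ (⊤ : ℕ∞) (fun y : EuclideanSpace ℝ (Fin n) => φ ((t:ℝ)⁻¹ • y)) :=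
      fun t => hφ.comp (contDiff_id.const_smul ((t:ℝ)⁻¹))
    have hsub_sm : ContDiff ℝ (⊤ : ℕ∞) (fun y : EuclideanSpace ℝ (Fin n) =>
        φ ((r:ℝ)⁻¹ • y) - φ ((s:ℝ)⁻¹ • y)) := (hct r).sub (hct s)
    have key := norm_iteratedFDeriv_smul_le (𝕜 := ℝ)
      (g_smooth (E := EuclideanSpace ℝ (Fin n))) hsub_sm x (by exact_mod_cast le_top : ((j : ℕ) : WithTop ℕ∞) ≤ ((⊤ : ℕ∞) : WithTop ℕ∞))
    have hscale : ∀ t : ℕ, N ≤ t → ∀ k, k ≤ j → ∀ z : EuclideanSpace ℝ (Fin n),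
        ‖iteratedFDeriv ℝ k (fun y : EuclideanSpace ℝ (Fin n) => φ ((t:ℝ)⁻¹ • y)) z‖ ≤ Mb := by
      intro t ht k hk z
      have ht1 : (1:ℝ) ≤ (t:ℝ) := by exact_mod_cast le_trans hN1 ht
      have ht0 : (0:ℝ) < (t:ℝ) := by linarith
      set L : EuclideanSpace ℝ (Fin n) →L[ℝ] EuclideanSpace ℝ (Fin n) :=
        (t:ℝ)⁻¹ • ContinuousLinearMap.id ℝ (EuclideanSpace ℝ (Fin n)) with hLdef
      have hLnorm : ‖L‖ ≤ 1 := by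
        rw [hLdef]
        refine (ContinuousLinearMap.opNorm_smul_le _ _).trans ?_
        rw [norm_inv, Real.norm_natCast]
        calc (t:ℝ)⁻¹ * ‖ContinuousLinearMap.id ℝ (EuclideanSpace ℝ (Fin n))‖
            ≤ (t:ℝ)⁻¹ * 1 := by
              refine mul_le_mul_of_nonneg_left ContinuousLinearMap.norm_id_le
                (inv_pos.mpr ht0).le
          _ ≤ 1 := by
              rw [mul_one]
              exact inv_le_one_of_one_le₀ ht1
      have hcomp : (fun y : EuclideanSpace ℝ (Fin n) => φ ((t:ℝ)⁻¹ • y)) = φ ∘ L := rfl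
      rw [hcomp, L.iteratedFDeriv_comp_right hφ z (by exact_mod_cast le_top)]
      refine (ContinuousMultilinearMap.norm_compContinuousLinearMap_le _ _).trans ?_
      have hprod : (∏ _i : Fin k, ‖L‖) ≤ 1 :=
        Finset.prod_le_one (fun _ _ => norm_nonneg L) (fun _ _ => hLnorm)
      calc ‖iteratedFDeriv ℝ k φ (L z)‖ * ∏ _i : Fin k, ‖L‖
          ≤ Mb * 1 := mul_le_mul ((hM k _).trans (hMle k hk)) hprod
            (Finset.prod_nonneg fun _ _ => norm_nonneg L) hMb0
        _ = Mb := mul_one _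
    have hsub : ∀ k, k ≤ j → ‖iteratedFDeriv ℝ k (fun y : EuclideanSpace ℝ (Fin n) =>
        φ ((r:ℝ)⁻¹ • y) - φ ((s:ℝ)⁻¹ • y)) x‖ ≤ 2 * Mb := by
      intro k hk
      have hfe : (fun y : EuclideanSpace ℝ (Fin n) => φ ((r:ℝ)⁻¹ • y) - φ ((s:ℝ)⁻¹ • y))
          = (fun y : EuclideanSpace ℝ (Fin n) => φ ((r:ℝ)⁻¹ • y))
            + (fun y : EuclideanSpace ℝ (Fin n) => -φ ((s:ℝ)⁻¹ • y)) := by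
        funext y; simp [sub_eq_add_neg]
      rw [hfe, iteratedFDeriv_add_apply ((hct r).contDiffAt.of_le (by exact_mod_cast le_top)) (((hct s).contDiffAt.of_le (by exact_mod_cast le_top)).neg),
        show (fun y : EuclideanSpace ℝ (Fin n) => -φ ((s:ℝ)⁻¹ • y))
          = -(fun y : EuclideanSpace ℝ (Fin n) => φ ((s:ℝ)⁻¹ • y)) from rfl,
        iteratedFDeriv_neg_apply]
      refine (norm_add_le _ _).trans ?_
      rw [norm_neg]
      linarith [hscale r hr k hk x, hscale s hs k hk x]
    have hgb : ∀ i, i ≤ j → ‖iteratedFDeriv ℝ i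
        (fun y : EuclideanSpace ℝ (Fin n) => ((1 + ‖y‖ ^ 2)⁻¹ : ℝ)) x‖ ≤ C / ((N:ℝ) * ρ) := by
      intro i hi
      have h1 := hC i hi x
      have hx1 : (N:ℝ) * ρ ≤ 1 + ‖x‖ := by linarith [norm_nonneg x]
      have hple : (N:ℝ) * ρ ≤ (1 + ‖x‖) ^ (i + 2) := by
        refine hx1.trans ?_
        exact le_self_pow₀ (by linarith [norm_nonneg x]) (by omega)
      have hppos : (0:ℝ) < (1 + ‖x‖) ^ (i + 2) := by positivity
      have h2 : ‖iteratedFDeriv ℝ i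
          (fun y : EuclideanSpace ℝ (Fin n) => ((1 + ‖y‖ ^ 2)⁻¹ : ℝ)) x‖
          ≤ C / (1 + ‖x‖) ^ (i + 2) := (le_div_iff₀ hppos).mpr h1
      refine h2.trans ?_
      gcongr
    refine key.trans ?_
    calc (∑ i ∈ Finset.range (j + 1), (j.choose i : ℝ)
          * ‖iteratedFDeriv ℝ i (fun y : EuclideanSpace ℝ (Fin n) => ((1 + ‖y‖ ^ 2)⁻¹ : ℝ)) x‖
          * ‖iteratedFDeriv ℝ (j - i) (fun y : EuclideanSpace ℝ (Fin n) =>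
              φ ((r:ℝ)⁻¹ • y) - φ ((s:ℝ)⁻¹ • y)) x‖)
        ≤ ∑ i ∈ Finset.range (j + 1), (j.choose i : ℝ) * (C / ((N:ℝ) * ρ)) * (2 * Mb) := by
          refine Finset.sum_le_sum fun i hi => ?_
          have hij : i ≤ j := Nat.lt_succ_iff.mp (Finset.mem_range.mp hi)
          refine mul_le_mul (mul_le_mul le_rfl (hgb i hij) (norm_nonneg _) (by positivity))
            (hsub (j - i) (Nat.sub_le j i)) (norm_nonneg _) (by positivity)
      _ = B / ((N:ℝ) * ρ) := by
          rw [← Finset.sum_mul, ← Finset.sum_mul, ← Nat.cast_sum, Nat.sum_range_choose, hBdef]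
          push_cast
          field_simp
      _ ≤ ε := by
          rw [div_le_iff₀ hNρpos]
          linarith
end

section
/- Sobolev-type embedding 𝒟_{L^p} ⊂ Ḃ: let 1 ≤ p < ∞ and let f : ℝⁿ → ℂ be smooth such that for every order j the function x ↦ iteratedFDeriv ℝ j f x belongs to L^p with respect to Lebesgue measure. Then for every order j the function x ↦ ‖iteratedFDeriv ℝ j f x‖ tends to 0 at infinity (i.e. tends to 0 along the cocompact filter on ℝⁿ). -/
set_option maxHeartbeats 1000000
set_option synthInstance.maxHeartbeats 400000

open Filter MeasureTheory Metric Set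
open scoped ENNReal NNReal Topology

section seg
variable {n : ℕ} {E : Type*} [NormedAddCommGroup E] [NormedSpace ℝ E]

lemma hasDerivAt_seg (u : EuclideanSpace ℝ (Fin n) → E) (hu : ContDiff ℝ (⊤ : ℕ∞) u) (k : ℕ)
    (y v : EuclideanSpace ℝ (Fin n)) (t : ℝ) :
    HasDerivAt (fun s : ℝ => iteratedFDeriv ℝ k u (y + s • v) (fun _ => v))
      (iteratedFDeriv ℝ (k + 1) u (y + t • v) (fun _ => v)) t := by
  have hc : HasDerivAt (fun s : ℝ => y + s • v) v t := by
    simpa using ((hasDerivAt_id t).smul_const v).const_add y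
  have hg : HasFDerivAt (iteratedFDeriv ℝ k u)
      (fderiv ℝ (iteratedFDeriv ℝ k u) (y + t • v)) (y + t • v) := by
    have : Differentiable ℝ (iteratedFDeriv ℝ k u) :=
      (hu.differentiable_iteratedFDeriv (by exact_mod_cast lt_top_iff_ne_top.2 (by simp)))
    exact (this _).hasFDerivAt
  have h1 : HasDerivAt (fun s : ℝ => iteratedFDeriv ℝ k u (y + s • v))
      (fderiv ℝ (iteratedFDeriv ℝ k u) (y + t • v) v) t := hg.comp_hasDerivAt t hc
  have h2 := (ContinuousMultilinearMap.apply ℝ (fun _ : Fin k => EuclideanSpace ℝ (Fin n)) E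
    (fun _ => v)).hasFDerivAt.comp_hasDerivAt t h1
  convert h2 using 1
  · rfl
  · rw [iteratedFDeriv_succ_apply_left]; rfl

lemma taylor_seg (u : EuclideanSpace ℝ (Fin n) → E) (hu : ContDiff ℝ (⊤ : ℕ∞) u) (m : ℕ)
    (y v : EuclideanSpace ℝ (Fin n)) (t : ℝ) :
    HasDerivAt (fun t : ℝ => ∑ k ∈ Finset.range (m + 1),
        ((1 - t) ^ k / k.factorial : ℝ) • iteratedFDeriv ℝ k u (y + t • v) (fun _ => v))
      (((1 - t) ^ m / m.factorial : ℝ) •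
        iteratedFDeriv ℝ (m + 1) u (y + t • v) (fun _ => v)) t := by
  induction m with
  | zero =>
      simp only [Finset.range_one, Finset.sum_singleton, pow_zero, Nat.factorial_zero,
        Nat.cast_one, div_one, one_smul]
      simpa using (hasDerivAt_seg u hu 0 y v t).const_smul (1 : ℝ) |>.congr_deriv (by simp)
  | succ m ih =>
      have ha : HasDerivAt (fun t : ℝ => ((1 - t) ^ (m + 1) / (m + 1).factorial : ℝ))
          (-(m + 1 : ℝ) * (1 - t) ^ m / (m + 1).factorial) t := by
        have h1 : HasDerivAt (fun t : ℝ => (1 - t)) (-1 : ℝ) t := by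
          simpa using (hasDerivAt_id t).const_sub 1
        have h2 : HasDerivAt (fun t : ℝ => (1 - t) ^ (m + 1))
            ((m + 1 : ℝ) * (1 - t) ^ m * (-1)) t := by
          simpa using (h1.fun_pow (m + 1))
        have := h2.div_const ((m + 1).factorial : ℝ)
        convert this using 1
        · rfl
        · rfl
        · ring
      have hterm := ha.fun_smul (hasDerivAt_seg u hu (m + 1) y v t)
      have hsum : HasDerivAt (fun t : ℝ => ∑ k ∈ Finset.range (m + 1 + 1),
          ((1 - t) ^ k / k.factorial : ℝ) • iteratedFDeriv ℝ k u (y + t • v) (fun _ => v))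
          ((((1 - t) ^ m / m.factorial : ℝ) •
              iteratedFDeriv ℝ (m + 1) u (y + t • v) (fun _ => v))
            + ((((1 - t) ^ (m + 1) / (m + 1).factorial : ℝ) •
                iteratedFDeriv ℝ (m + 1 + 1) u (y + t • v) (fun _ => v))
              + ((-(m + 1 : ℝ) * (1 - t) ^ m / (m + 1).factorial) •
                iteratedFDeriv ℝ (m + 1) u (y + t • v) (fun _ => v)))) t := by
        have := ih.fun_add hterm
        simpa only [← Finset.sum_range_succ] using this
      convert hsum using 1
      have hfac : ((m + 1).factorial : ℝ) = (m + 1) * m.factorial := by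
        exact_mod_cast Nat.factorial_succ m
      have hne : ((m + 1 : ℝ)) ≠ 0 := by positivity
      have hfne : ((m.factorial : ℝ)) ≠ 0 := Nat.cast_ne_zero.2 (Nat.factorial_ne_zero m)
      have hcancel : (-(m + 1 : ℝ) * (1 - t) ^ m / (m + 1).factorial)
          = -((1 - t) ^ m / m.factorial) := by
        rw [hfac]; field_simp
      rw [hcancel, neg_smul]
      abel

lemma cont_seg [CompleteSpace E] (u : EuclideanSpace ℝ (Fin n) → E) (hu : ContDiff ℝ (⊤ : ℕ∞) u)
    (k : ℕ) (y v : EuclideanSpace ℝ (Fin n)) :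
    Continuous (fun t : ℝ => iteratedFDeriv ℝ k u (y + t • v) (fun _ => v)) := by
  exact (ContinuousMultilinearMap.apply ℝ (fun _ : Fin k => EuclideanSpace ℝ (Fin n)) E
    (fun _ => v)).continuous.comp ((hu.continuous_iteratedFDeriv (by exact_mod_cast le_top)).comp
      (by continuity))

lemma taylor_identity [CompleteSpace E] (u : EuclideanSpace ℝ (Fin n) → E)
    (hu : ContDiff ℝ (⊤ : ℕ∞) u) (m : ℕ) (x y : EuclideanSpace ℝ (Fin n)) :
    u x = (∑ k ∈ Finset.range (m + 1),
        ((1 : ℝ) / k.factorial) • iteratedFDeriv ℝ k u y (fun _ => x - y))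
      + ∫ t in (0:ℝ)..1, ((1 - t) ^ m / m.factorial : ℝ) •
          iteratedFDeriv ℝ (m + 1) u (y + t • (x - y)) (fun _ => x - y) := by
  set v := x - y with hv
  have hderiv : ∀ t ∈ Set.uIcc (0:ℝ) 1,
      HasDerivAt (fun t : ℝ => ∑ k ∈ Finset.range (m + 1),
        ((1 - t) ^ k / k.factorial : ℝ) • iteratedFDeriv ℝ k u (y + t • v) (fun _ => v))
      (((1 - t) ^ m / m.factorial : ℝ) •
        iteratedFDeriv ℝ (m + 1) u (y + t • v) (fun _ => v)) t :=
    fun t _ => taylor_seg u hu m y v t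
  have hint : IntervalIntegrable (fun t : ℝ => ((1 - t) ^ m / m.factorial : ℝ) •
      iteratedFDeriv ℝ (m + 1) u (y + t • v) (fun _ => v)) volume 0 1 :=
    (Continuous.smul (by continuity) (cont_seg u hu (m+1) y v)).intervalIntegrable 0 1
  have heq := intervalIntegral.integral_eq_sub_of_hasDerivAt hderiv hint
  have h1 : (∑ k ∈ Finset.range (m + 1),
      ((1 - 1) ^ k / k.factorial : ℝ) • iteratedFDeriv ℝ k u (y + (1:ℝ) • v) (fun _ => v))
      = u x := by
    rw [Finset.sum_eq_single 0]
    · simp [hv]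
    · intro k _ hk
      rcases Nat.exists_eq_succ_of_ne_zero hk with ⟨l, rfl⟩
      simp
    · simp
  have h0 : (∑ k ∈ Finset.range (m + 1),
      ((1 - 0) ^ k / k.factorial : ℝ) • iteratedFDeriv ℝ k u (y + (0:ℝ) • v) (fun _ => v))
      = ∑ k ∈ Finset.range (m + 1),
        ((1 : ℝ) / k.factorial) • iteratedFDeriv ℝ k u y (fun _ => v) := by
    simp
  rw [heq, h1, h0]
  abel

lemma real_bound [CompleteSpace E] (u : EuclideanSpace ℝ (Fin n) → E) (hu : ContDiff ℝ (⊤ : ℕ∞) u)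
    (x y : EuclideanSpace ℝ (Fin n)) (hy : y ∈ ball x 1) :
    ‖u x‖ ≤ (∑ k ∈ Finset.range (n + 1), ‖iteratedFDeriv ℝ k u y‖)
      + ∫ t in (0:ℝ)..1, (1 - t) ^ n * ‖iteratedFDeriv ℝ (n + 1) u (y + t • (x - y))‖ := by
  have hv : ‖x - y‖ ≤ 1 := by
    rw [mem_ball] at hy
    have := hy.le
    rw [dist_eq_norm] at this
    rwa [norm_sub_rev]
  have happ : ∀ (k : ℕ) (z : EuclideanSpace ℝ (Fin n)),
      ‖iteratedFDeriv ℝ k u z (fun _ => x - y)‖ ≤ ‖iteratedFDeriv ℝ k u z‖ := by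
    intro k z
    calc ‖iteratedFDeriv ℝ k u z (fun _ => x - y)‖
        ≤ ‖iteratedFDeriv ℝ k u z‖ * ∏ _i : Fin k, ‖x - y‖ :=
          (iteratedFDeriv ℝ k u z).le_opNorm _
      _ ≤ ‖iteratedFDeriv ℝ k u z‖ * 1 := by
          apply mul_le_mul_of_nonneg_left _ (norm_nonneg _)
          calc ∏ _i : Fin k, ‖x - y‖ = ‖x - y‖ ^ k := by
                simp [Finset.prod_const]
            _ ≤ 1 ^ k := pow_le_pow_left₀ (norm_nonneg _) hv k
            _ = 1 := one_pow k
      _ = ‖iteratedFDeriv ℝ k u z‖ := mul_one _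
  rw [taylor_identity u hu n x y]
  refine (norm_add_le _ _).trans (add_le_add ?_ ?_)
  · refine (norm_sum_le _ _).trans (Finset.sum_le_sum fun k _ => ?_)
    rw [norm_smul]
    calc ‖(1:ℝ) / k.factorial‖ * ‖iteratedFDeriv ℝ k u y (fun _ => x - y)‖
        ≤ 1 * ‖iteratedFDeriv ℝ k u y‖ := by
          apply mul_le_mul _ (happ k y) (norm_nonneg _) zero_le_one
          rw [Real.norm_eq_abs, abs_of_nonneg (by positivity)]
          rw [div_le_one (by positivity)]
          exact_mod_cast Nat.one_le_iff_ne_zero.2 k.factorial_ne_zero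
      _ = ‖iteratedFDeriv ℝ k u y‖ := one_mul _
  · refine (intervalIntegral.norm_integral_le_integral_norm zero_le_one).trans ?_
    apply intervalIntegral.integral_mono_on zero_le_one
    · exact ((Continuous.smul (by continuity) (cont_seg u hu (n+1) y (x - y))).norm).intervalIntegrable 0 1
    · exact (Continuous.mul (by continuity)
        ((hu.continuous_iteratedFDeriv (by exact_mod_cast le_top)).comp (by continuity)).norm).intervalIntegrable 0 1
    · intro t ht
      rw [norm_smul]
      have h1t : (0:ℝ) ≤ 1 - t := by simp [ht.2]
      calc ‖(1 - t) ^ n / (n.factorial : ℝ)‖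
            * ‖iteratedFDeriv ℝ (n+1) u (y + t • (x - y)) (fun _ => x - y)‖
          ≤ (1 - t) ^ n * ‖iteratedFDeriv ℝ (n+1) u (y + t • (x - y))‖ := by
            apply mul_le_mul _ (happ (n+1) _) (norm_nonneg _) (by positivity)
            rw [Real.norm_eq_abs, abs_of_nonneg (by positivity)]
            have hfac1 : (1:ℝ) ≤ (n.factorial : ℝ) := by
              exact_mod_cast Nat.one_le_iff_ne_zero.2 n.factorial_ne_zero
            exact div_le_self (pow_nonneg h1t n) hfac1

lemma cov_smul {x : EuclideanSpace ℝ (Fin n)} {s : ℝ} (hs0 : 0 < s) (hs1 : s ≤ 1)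
    {g' : EuclideanSpace ℝ (Fin n) → ℝ≥0∞} (hg' : Measurable g') :
    ENNReal.ofReal (s ^ n) * ∫⁻ y in ball x 1, g' ((x - s • x) + s • y)
      ≤ ∫⁻ z in ball x 1, g' z := by
  set T : EuclideanSpace ℝ (Fin n) → EuclideanSpace ℝ (Fin n) :=
    fun y => (x - s • x) + s • y with hT
  have hTmeas : Measurable T := by
    exact (measurable_const.add (measurable_id.const_smul s))
  have hTball : ∀ y : EuclideanSpace ℝ (Fin n), T y ∈ ball x s ↔ y ∈ ball x 1 := by
    intro y
    simp only [mem_ball, dist_eq_norm, hT]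
    have : (x - s • x) + s • y - x = s • (y - x) := by
      module
    rw [this, norm_smul, Real.norm_eq_abs, abs_of_pos hs0]
    constructor
    · intro h
      nlinarith [norm_nonneg (y - x)]
    · intro h
      nlinarith [norm_nonneg (y - x)]
  have hmap : Measure.map T (volume : Measure (EuclideanSpace ℝ (Fin n)))
      = ENNReal.ofReal ((s ^ n)⁻¹) • volume := by
    have h1 : T = (fun z => (x - s • x) + z) ∘ (fun y : EuclideanSpace ℝ (Fin n) => s • y) := by
      funext y; rfl
    have hmm := Measure.map_map (μ := (volume : Measure (EuclideanSpace ℝ (Fin n))))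
      (g := fun z : EuclideanSpace ℝ (Fin n) => (x - s • x) + z)
      (f := fun y : EuclideanSpace ℝ (Fin n) => s • y)
      (measurable_const.add measurable_id) (measurable_id.const_smul s)
    rw [h1, ← hmm]
    have h2 : Measure.map (fun y : EuclideanSpace ℝ (Fin n) => s • y) volume
        = ENNReal.ofReal (|(s ^ Module.finrank ℝ (EuclideanSpace ℝ (Fin n)))⁻¹|) • volume := by
      exact Measure.map_addHaar_smul volume (ne_of_gt hs0)
    rw [h2]
    rw [Measure.map_smul]
    rw [map_add_left_eq_self]
    congr 1
    rw [show Module.finrank ℝ (EuclideanSpace ℝ (Fin n)) = n from finrank_euclideanSpace_fin]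
    rw [abs_of_pos (by positivity)]
  have hindic : (fun y => (ball x 1).indicator (fun y => g' (T y)) y)
      = fun y => ((ball x s).indicator g') (T y) := by
    funext y
    by_cases h : y ∈ ball x 1
    · rw [indicator_of_mem h, indicator_of_mem ((hTball y).2 h)]
    · rw [indicator_of_notMem h, indicator_of_notMem (fun hc => h ((hTball y).1 hc))]
  have key : ∫⁻ y in ball x 1, g' (T y)
      = ENNReal.ofReal ((s ^ n)⁻¹) * ∫⁻ z in ball x s, g' z := by
    rw [← lintegral_indicator measurableSet_ball, hindic,
      ← lintegral_map ((hg'.indicator measurableSet_ball)) hTmeas, hmap,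
      lintegral_smul_measure, lintegral_indicator measurableSet_ball, smul_eq_mul]
  calc ENNReal.ofReal (s ^ n) * ∫⁻ y in ball x 1, g' (T y)
      = (ENNReal.ofReal (s ^ n) * ENNReal.ofReal ((s ^ n)⁻¹)) * ∫⁻ z in ball x s, g' z := by
        rw [key, mul_assoc]
    _ = ∫⁻ z in ball x s, g' z := by
        rw [← ENNReal.ofReal_mul (by positivity), mul_inv_cancel₀ (by positivity),
          ENNReal.ofReal_one, one_mul]
    _ ≤ ∫⁻ z in ball x 1, g' z :=
        lintegral_mono_set (ball_subset_ball hs1)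

lemma pointwise_bound [CompleteSpace E] (hn : 0 < n) (u : EuclideanSpace ℝ (Fin n) → E)
    (hu : ContDiff ℝ (⊤ : ℕ∞) u) (x : EuclideanSpace ℝ (Fin n)) :
    (‖u x‖₊ : ℝ≥0∞) * volume (ball x 1)
      ≤ ∑ k ∈ Finset.range (n + 2),
          ∫⁻ y in ball x 1, (‖iteratedFDeriv ℝ k u y‖₊ : ℝ≥0∞) := by
  set g : ℕ → EuclideanSpace ℝ (Fin n) → ℝ≥0∞ :=
    fun k y => (‖iteratedFDeriv ℝ k u y‖₊ : ℝ≥0∞) with hgdef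
  have hgmeas : ∀ k, Measurable (g k) := fun k =>
    ((hu.continuous_iteratedFDeriv (by exact_mod_cast le_top)).nnnorm.measurable).coe_nnreal_ennreal
  set w : EuclideanSpace ℝ (Fin n) → ℝ → ℝ≥0∞ := fun y t =>
    ENNReal.ofReal ((1 - t) ^ n * ‖iteratedFDeriv ℝ (n + 1) u (y + t • (x - y))‖) with hwdef
  have hwcont : Continuous (fun q : EuclideanSpace ℝ (Fin n) × ℝ => w q.1 q.2) := by
    apply ENNReal.continuous_ofReal.comp
    apply Continuous.mul
    · continuity
    · apply Continuous.norm
      apply (hu.continuous_iteratedFDeriv (by exact_mod_cast le_top)).comp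
      fun_prop
  have hwmeas : Measurable (fun q : EuclideanSpace ℝ (Fin n) × ℝ => w q.1 q.2) :=
    hwcont.measurable
  set Φ : EuclideanSpace ℝ (Fin n) → ℝ≥0∞ :=
    fun y => ∫⁻ t in Set.Ioc (0:ℝ) 1, w y t with hPhidef
  have hΦmeas : Measurable Φ := by
    exact Measurable.lintegral_prod_right hwmeas
  have hA : ∀ y ∈ ball x 1, (‖u x‖₊ : ℝ≥0∞) ≤ (∑ k ∈ Finset.range (n + 1), g k y) + Φ y := by
    intro y hy
    have hreal := real_bound u hu x y hy
    have hcont : Continuous (fun t : ℝ =>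
        (1 - t) ^ n * ‖iteratedFDeriv ℝ (n + 1) u (y + t • (x - y))‖) := by
      apply Continuous.mul
      · continuity
      · apply Continuous.norm
        apply (hu.continuous_iteratedFDeriv (by exact_mod_cast le_top)).comp
        continuity
    calc (‖u x‖₊ : ℝ≥0∞) = ENNReal.ofReal ‖u x‖ := (ofReal_norm _).symm
      _ ≤ ENNReal.ofReal ((∑ k ∈ Finset.range (n + 1), ‖iteratedFDeriv ℝ k u y‖)
            + ∫ t in (0:ℝ)..1, (1 - t) ^ n * ‖iteratedFDeriv ℝ (n + 1) u (y + t • (x - y))‖) :=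
          ENNReal.ofReal_le_ofReal hreal
      _ ≤ ENNReal.ofReal (∑ k ∈ Finset.range (n + 1), ‖iteratedFDeriv ℝ k u y‖)
            + ENNReal.ofReal (∫ t in (0:ℝ)..1,
              (1 - t) ^ n * ‖iteratedFDeriv ℝ (n + 1) u (y + t • (x - y))‖) :=
          ENNReal.ofReal_add_le
      _ ≤ (∑ k ∈ Finset.range (n + 1), g k y) + Φ y := by
          apply add_le_add
          · rw [ENNReal.ofReal_sum_of_nonneg (fun k _ => norm_nonneg _)]
            apply le_of_eq
            exact Finset.sum_congr rfl fun k _ => ofReal_norm _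
          · rw [intervalIntegral.integral_of_le zero_le_one]
            have hnn : 0 ≤ᵐ[volume.restrict (Set.Ioc (0:ℝ) 1)] fun t =>
                (1 - t) ^ n * ‖iteratedFDeriv ℝ (n + 1) u (y + t • (x - y))‖ := by
              filter_upwards [self_mem_ae_restrict measurableSet_Ioc] with t ht
              simp only [Pi.zero_apply]
              exact mul_nonneg (pow_nonneg (by linarith [ht.2]) n) (norm_nonneg _)
            rw [MeasureTheory.ofReal_integral_eq_lintegral_ofReal hcont.integrableOn_Ioc hnn]
  have hB : (‖u x‖₊ : ℝ≥0∞) * volume (ball x 1)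
      ≤ (∑ k ∈ Finset.range (n + 1), ∫⁻ y in ball x 1, g k y) + ∫⁻ y in ball x 1, Φ y := by
    have h1 : (‖u x‖₊ : ℝ≥0∞) * volume (ball x 1)
        = ∫⁻ _ in ball x 1, (‖u x‖₊ : ℝ≥0∞) := (setLIntegral_const _ _).symm
    rw [h1]
    calc ∫⁻ _ in ball x 1, (‖u x‖₊ : ℝ≥0∞)
        ≤ ∫⁻ y in ball x 1, ((∑ k ∈ Finset.range (n + 1), g k y) + Φ y) :=
          setLIntegral_mono ((Finset.measurable_sum _ fun k _ => hgmeas k).add hΦmeas) hA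
      _ = (∑ k ∈ Finset.range (n + 1), ∫⁻ y in ball x 1, g k y) + ∫⁻ y in ball x 1, Φ y := by
          rw [lintegral_add_right _ hΦmeas,
            lintegral_finset_sum _ (fun k _ => hgmeas k)]
  have hC : ∫⁻ y in ball x 1, Φ y ≤ ∫⁻ z in ball x 1, g (n + 1) z := by
    have hswap : ∫⁻ y in ball x 1, Φ y
        = ∫⁻ t in Set.Ioc (0:ℝ) 1, ∫⁻ y in ball x 1, w y t :=
      lintegral_lintegral_swap hwmeas.aemeasurable
    rw [hswap]
    have hI : ∀ t ∈ Set.Ioc (0:ℝ) 1,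
        (∫⁻ y in ball x 1, w y t) ≤ ∫⁻ z in ball x 1, g (n + 1) z := by
      intro t ht
      rcases eq_or_lt_of_le ht.2 with h1 | h1
      · have : ∀ y : EuclideanSpace ℝ (Fin n), w y t = 0 := by
          intro y
          rw [hwdef]
          simp only [← h1, sub_self, zero_pow hn.ne', zero_mul, ENNReal.ofReal_zero]
        simp only [this, lintegral_zero]
        exact zero_le
      · set sp := 1 - t with hsp
        have hs0 : 0 < sp := by simp [hsp]; linarith
        have hs1 : sp ≤ 1 := by simp [hsp]; linarith [ht.1]
        have hrw : ∀ y : EuclideanSpace ℝ (Fin n),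
            w y t = ENNReal.ofReal (sp ^ n) * g (n + 1) ((x - sp • x) + sp • y) := by
          intro y
          have hpt : y + t • (x - y) = (x - sp • x) + sp • y := by
            rw [hsp]; module
          rw [hwdef]
          simp only [hpt]
          rw [← hsp, ENNReal.ofReal_mul (by positivity), ofReal_norm]; rfl
        calc ∫⁻ y in ball x 1, w y t
            = ENNReal.ofReal (sp ^ n) *
                ∫⁻ y in ball x 1, g (n + 1) ((x - sp • x) + sp • y) := by
              simp_rw [hrw]
              have hcm : Measurable fun y : EuclideanSpace ℝ (Fin n) =>
                  g (n + 1) ((x - sp • x) + sp • y) :=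
                (hgmeas (n + 1)).comp (measurable_const.add (measurable_id.const_smul sp))
              exact lintegral_const_mul _ hcm
          _ ≤ ∫⁻ z in ball x 1, g (n + 1) z := cov_smul hs0 hs1 (hgmeas (n + 1))
    calc ∫⁻ t in Set.Ioc (0:ℝ) 1, ∫⁻ y in ball x 1, w y t
        ≤ ∫⁻ _ in Set.Ioc (0:ℝ) 1, ∫⁻ z in ball x 1, g (n + 1) z :=
          setLIntegral_mono measurable_const hI
      _ = (∫⁻ z in ball x 1, g (n + 1) z) * volume (Set.Ioc (0:ℝ) 1) :=
          setLIntegral_const _ _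
      _ = ∫⁻ z in ball x 1, g (n + 1) z := by
          rw [Real.volume_Ioc, sub_zero, ENNReal.ofReal_one, mul_one]
  rw [Finset.sum_range_succ]
  exact hB.trans (add_le_add_right hC _)

lemma tail_tendsto {E' : Type*} [NormedAddCommGroup E'] (gf : EuclideanSpace ℝ (Fin n) → E')
    (hgc : Continuous gf) {p : ℝ≥0∞} (hp1 : 1 ≤ p) (hp2 : p ≠ ⊤)
    (hmem : MemLp gf p volume) :
    Tendsto (fun x : EuclideanSpace ℝ (Fin n) => ∫⁻ y in ball x 1, (‖gf y‖₊ : ℝ≥0∞))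
      (cocompact (EuclideanSpace ℝ (Fin n))) (𝓝 0) := by
  have hp0 : p ≠ 0 := fun h => by simp [h] at hp1
  set p' := p.toReal with hp'def
  have hp'1 : 1 ≤ p' := by
    rw [hp'def, ← ENNReal.toReal_one]
    exact ENNReal.toReal_mono hp2 hp1
  have hp'pos : 0 < p' := lt_of_lt_of_le one_pos hp'1
  set ν := (volume : Measure (EuclideanSpace ℝ (Fin n))).withDensity
    (fun y => (‖gf y‖₊ : ℝ≥0∞) ^ p') with hνdef
  have hνfin : ν univ ≠ ⊤ := by
    rw [hνdef, withDensity_apply _ MeasurableSet.univ, Measure.restrict_univ]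
    exact (lintegral_rpow_enorm_lt_top_of_eLpNorm_lt_top hp0 hp2 hmem.2).ne
  have hν_tendsto : Tendsto (fun x : EuclideanSpace ℝ (Fin n) => ν (ball x 1))
      (cocompact (EuclideanSpace ℝ (Fin n))) (𝓝 0) := by
    rw [ENNReal.tendsto_nhds_zero]
    intro ε hε
    have hcap : Tendsto (fun m : ℕ => ν ((closedBall (0 : EuclideanSpace ℝ (Fin n)) (m:ℝ))ᶜ))
        atTop (𝓝 (ν (⋂ m : ℕ, (closedBall (0 : EuclideanSpace ℝ (Fin n)) (m:ℝ))ᶜ))) := by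
      apply tendsto_measure_iInter_atTop
        (fun m => measurableSet_closedBall.compl.nullMeasurableSet)
      · intro a b hab
        exact compl_subset_compl.2 (closedBall_subset_closedBall (by exact_mod_cast hab))
      · exact ⟨0, ne_of_lt (lt_of_le_of_lt (measure_mono (subset_univ _))
          (lt_top_iff_ne_top.2 hνfin))⟩
    have hempty : (⋂ m : ℕ, (closedBall (0 : EuclideanSpace ℝ (Fin n)) (m:ℝ))ᶜ) = ∅ := by
      rw [eq_empty_iff_forall_notMem]
      intro z hz
      simp only [mem_iInter, mem_compl_iff, mem_closedBall, dist_zero_right, not_le] at hz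
      obtain ⟨m, hm⟩ := exists_nat_ge ‖z‖
      exact absurd (hz m) (not_lt.2 hm)
    rw [hempty, measure_empty] at hcap
    obtain ⟨M, hM⟩ := (ENNReal.tendsto_nhds_zero.1 hcap ε hε).exists
    have hmemco : ((closedBall (0 : EuclideanSpace ℝ (Fin n)) ((M:ℝ) + 1))ᶜ)
        ∈ cocompact (EuclideanSpace ℝ (Fin n)) :=
      Filter.mem_cocompact.2 ⟨_, isCompact_closedBall _ _, subset_rfl⟩
    refine Filter.eventually_of_mem hmemco fun x hx => ?_
    have hsub : ball x 1 ⊆ (closedBall (0 : EuclideanSpace ℝ (Fin n)) (M:ℝ))ᶜ := by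
      intro y hy
      simp only [mem_compl_iff, mem_closedBall, dist_zero_right, not_le] at hx ⊢
      have h1 : dist y x < 1 := mem_ball.1 hy
      have h2 : (M:ℝ) + 1 < ‖x‖ := hx
      have := norm_sub_norm_le x y
      rw [← dist_eq_norm'] at this
      linarith [dist_comm y x ▸ h1]
    exact le_trans (measure_mono hsub) hM
  set c1 : ℝ≥0∞ := volume (ball (0 : EuclideanSpace ℝ (Fin n)) 1) with hc1
  set C : ℝ≥0∞ := c1 ^ (1 - 1/p') with hCdef
  have hCne : C ≠ ⊤ := by
    apply ENNReal.rpow_ne_top_of_nonneg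
    · have : 1/p' ≤ 1 := by
        rw [div_le_one hp'pos]; exact hp'1
      linarith
    · exact (measure_ball_lt_top).ne
  have hbound : ∀ x : EuclideanSpace ℝ (Fin n),
      (∫⁻ y in ball x 1, (‖gf y‖₊ : ℝ≥0∞)) ≤ (ν (ball x 1)) ^ (1/p') * C := by
    intro x
    have h1 : ∫⁻ y in ball x 1, (‖gf y‖₊ : ℝ≥0∞)
        = eLpNorm gf 1 (volume.restrict (ball x 1)) :=
      by rw [eLpNorm_one_eq_lintegral_enorm]; rfl
    have h2 := eLpNorm_le_eLpNorm_mul_rpow_measure_univ (μ := volume.restrict (ball x 1))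
      hp1 hgc.aestronglyMeasurable
    have h3 : eLpNorm gf p (volume.restrict (ball x 1)) = (ν (ball x 1)) ^ (1/p') := by
      rw [eLpNorm_eq_lintegral_rpow_enorm_toReal hp0 hp2, hνdef,
        withDensity_apply _ measurableSet_ball]; rfl
    have h4 : (volume.restrict (ball x 1)) univ = c1 := by
      rw [Measure.restrict_apply MeasurableSet.univ, univ_inter, hc1,
        Measure.addHaar_ball_center]
    rw [h1]
    refine h2.trans ?_
    rw [h3, h4]
    apply mul_le_mul_right
    apply le_of_eq
    congr 1
    simp [ENNReal.toReal_one]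
    exact hp'def.symm
  have hνrpow : Tendsto (fun x : EuclideanSpace ℝ (Fin n) => (ν (ball x 1)) ^ (1/p') * C)
      (cocompact (EuclideanSpace ℝ (Fin n))) (𝓝 0) := by
    have h5 : Tendsto (fun x : EuclideanSpace ℝ (Fin n) => (ν (ball x 1)) ^ (1/p'))
        (cocompact (EuclideanSpace ℝ (Fin n))) (𝓝 0) := by
      have h6 := ((ENNReal.continuous_rpow_const (y := 1/p')).tendsto 0).comp hν_tendsto
      rw [ENNReal.zero_rpow_of_pos (by positivity : (0:ℝ) < 1/p')] at h6
      simpa [Function.comp_def, one_div] using h6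
    have := ENNReal.Tendsto.mul_const h5 (Or.inr hCne)
    simpa using this
  exact tendsto_of_tendsto_of_tendsto_of_le_of_le tendsto_const_nhds hνrpow
    (fun x => zero_le) hbound

lemma norm_iter_iter (j : ℕ) :
    ∀ {G : Type _} [NormedAddCommGroup G] [NormedSpace ℝ G]
      (f : EuclideanSpace ℝ (Fin n) → G) (k : ℕ) (x : EuclideanSpace ℝ (Fin n)),
      ‖iteratedFDeriv ℝ k (iteratedFDeriv ℝ j f) x‖ = ‖iteratedFDeriv ℝ (j + k) f x‖ := by
  induction j with
  | zero =>
      intro G _ _ f k x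
      rw [iteratedFDeriv_zero_eq_comp]
      rw [LinearIsometryEquiv.norm_iteratedFDeriv_comp_left]
      rw [Nat.zero_add]
  | succ j ih =>
      intro G _ _ f k x
      have h1 : iteratedFDeriv ℝ (j + 1) f =
          ⇑(continuousMultilinearCurryRightEquiv' ℝ j (EuclideanSpace ℝ (Fin n)) G).symm ∘
            iteratedFDeriv ℝ j (fun y => fderiv ℝ f y) :=
        funext fun z => iteratedFDeriv_succ_eq_comp_right
      have h2 := (continuousMultilinearCurryRightEquiv' ℝ j
          (EuclideanSpace ℝ (Fin n)) G).symm.norm_iteratedFDeriv_comp_left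
          (iteratedFDeriv ℝ j fun y => fderiv ℝ f y) x k
      rw [h1, h2, ih, norm_iteratedFDeriv_fderiv, show j + 1 + k = j + k + 1 from by omega]

end seg

/-- Sobolev-type embedding `𝒟_{L^p} ⊂ Ḃ`: if `1 ≤ p < ∞` and `f : ℝⁿ → ℂ` is smooth with all
iterated derivatives in `L^p`, then all iterated derivatives of `f` tend to `0` at
infinity. -/
theorem derivs_vanish_at_infty_of_derivs_memLp (n : ℕ) (p : ℝ≥0∞) (hp1 : 1 ≤ p)
    (hp2 : p ≠ ⊤) (f : EuclideanSpace ℝ (Fin n) → ℂ) (hf : ContDiff ℝ (⊤ : ℕ∞) f)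
    (hfp : ∀ j : ℕ, MemLp (fun x => iteratedFDeriv ℝ j f x) p volume) :
    ∀ j : ℕ, Tendsto (fun x : EuclideanSpace ℝ (Fin n) => ‖iteratedFDeriv ℝ j f x‖)
      (cocompact (EuclideanSpace ℝ (Fin n))) (nhds 0) := by
  intro j
  rcases Nat.eq_zero_or_pos n with hn0 | hn
  · subst hn0
    rw [Filter.cocompact_eq_bot]
    exact tendsto_bot
  · set u := iteratedFDeriv ℝ j f with hu_def
    have hu : ContDiff ℝ (⊤ : ℕ∞) u := hf.iteratedFDeriv_right (by exact_mod_cast le_top)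
    have hcont : ∀ k : ℕ, Continuous (iteratedFDeriv ℝ k u) := fun k =>
      hu.continuous_iteratedFDeriv (by exact_mod_cast le_top)
    have hmem : ∀ k : ℕ, MemLp (fun x => iteratedFDeriv ℝ k u x) p volume := by
      intro k
      refine (hfp (j + k)).of_le ((hcont k).aestronglyMeasurable) ?_
      filter_upwards with x
      rw [hu_def, norm_iter_iter]
    set S : EuclideanSpace ℝ (Fin n) → ℝ≥0∞ := fun x => ∑ k ∈ Finset.range (n + 2),
      ∫⁻ y in ball x 1, (‖iteratedFDeriv ℝ k u y‖₊ : ℝ≥0∞) with hSdef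
    have hS : Tendsto S (cocompact (EuclideanSpace ℝ (Fin n))) (𝓝 0) := by
      rw [hSdef]
      have := tendsto_finset_sum (Finset.range (n + 2))
        (fun k _ => tail_tendsto (iteratedFDeriv ℝ k u) (hcont k) hp1 hp2 (hmem k))
      simpa using this
    set c1 := volume (ball (0 : EuclideanSpace ℝ (Fin n)) 1) with hc1
    have hc1pos : c1 ≠ 0 := (measure_ball_pos _ _ one_pos).ne'
    have hc1top : c1 ≠ ⊤ := measure_ball_lt_top.ne
    have hnn : Tendsto (fun x => (‖u x‖₊ : ℝ≥0∞))
        (cocompact (EuclideanSpace ℝ (Fin n))) (𝓝 0) := by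
      have hb : ∀ x, (‖u x‖₊ : ℝ≥0∞) ≤ S x * c1⁻¹ := by
        intro x
        have h := pointwise_bound hn u hu x
        rw [Measure.addHaar_ball_center, ← hc1] at h
        have h2 : (‖u x‖₊ : ℝ≥0∞) ≤ S x / c1 :=
          (ENNReal.le_div_iff_mul_le (Or.inl hc1pos) (Or.inl hc1top)).2 h
        rwa [ENNReal.div_eq_inv_mul, mul_comm] at h2
      have hSC : Tendsto (fun x => S x * c1⁻¹)
          (cocompact (EuclideanSpace ℝ (Fin n))) (𝓝 0) := by
        have := ENNReal.Tendsto.mul_const hS (Or.inr (ENNReal.inv_ne_top.2 hc1pos))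
        simpa using this
      exact tendsto_of_tendsto_of_tendsto_of_le_of_le tendsto_const_nhds hSC
        (fun x => zero_le) hb
    have hfin := (ENNReal.tendsto_toReal (by simp : (0:ℝ≥0∞) ≠ ⊤)).comp hnn
    simpa [Function.comp_def] using hfin
end
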